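/- arXiv:1403.7605 — 5 statements merged into one kernel-verified Lean document; each statement's English description precedes it below -/
import Mathlib

section
/- In every n-resource selection game G (with nondecreasing, not necessarily continuous, cost functions), the set D_G is nonempty; consequently P_G is nonempty and h_G is a well-defined real number. -/
open scoped NNReal

/-- `EqDistOn n f S t h`: the total mass `t` admits an equalizing distribution
among the functions `(f k)_{k ∈ S}` with common value `h`; when this holds, the
equalization `Eq⟨f_k : k ∈ S⟩(t)` is defined and equals `h`. -/
def EqDistOn (n : ℕ) (f : Fin n → ℝ≥0 → ℝ) (S : Finset (Fin n)) (t : ℝ≥0) (h : ℝ) : Prop :=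
  ∃ ν : Fin n → ℝ≥0, ∑ k ∈ S, ν k = t ∧ ∀ k ∈ S, f k (ν k) = h

/-- The total mass `Σ {μ R : ∅ ≠ R ⊆ S}` of the player types that may consume
only from resources in `S`. -/
def innerMass (n : ℕ) (μ : Finset (Fin n) → ℝ≥0) (S : Finset (Fin n)) : ℝ≥0 :=
  ∑ R ∈ S.powerset.filter (fun R => R.Nonempty), μ R

/-- The total mass `Σ {μ R : ∅ ≠ R ⊆ S, R ∩ S' ≠ ∅}` of the player types
within `S` that may consume from some resource of `S'`. -/
def touchMass (n : ℕ) (μ : Finset (Fin n) → ℝ≥0) (S S' : Finset (Fin n)) : ℝ≥0 :=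
  ∑ R ∈ S.powerset.filter (fun R => R.Nonempty ∧ (R ∩ S').Nonempty), μ R

/-- `MemD n f μ V S e`: the nonempty set `S` of resources of the game with
resource set `V` is an element of `D_G` with `E_G(S) = e`, i.e., `E_G(S)` is
defined and equals `e` and `M_G(S) = ∅` (for every nonempty `S' ⊆ S` there is
some `t ≤ touchMass S S'` whose equalization among `(f k)_{k ∈ S'}` is defined
and equals `e`). -/
def MemD (n : ℕ) (f : Fin n → ℝ≥0 → ℝ) (μ : Finset (Fin n) → ℝ≥0)
    (V : Finset (Fin n)) (S : Finset (Fin n)) (e : ℝ) : Prop :=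
  S.Nonempty ∧ S ⊆ V ∧ EqDistOn n f S (innerMass n μ S) e ∧
  ∀ S' ⊆ S, S'.Nonempty → ∃ t ≤ touchMass n μ S S', EqDistOn n f S' t e

/-- `IsHG n f μ V h`: `h` is the maximum `h_G = max_{S ∈ D_G} E_G(S)` of the
game with cost functions `f`, masses `μ` and resource set `V`. -/
def IsHG (n : ℕ) (f : Fin n → ℝ≥0 → ℝ) (μ : Finset (Fin n) → ℝ≥0)
    (V : Finset (Fin n)) (h : ℝ) : Prop :=
  (∃ S, MemD n f μ V S h) ∧ ∀ S e, MemD n f μ V S e → e ≤ h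

-- uniqueness of equalization value
lemma eqDist_unique (n : ℕ) (f : Fin n → ℝ≥0 → ℝ) (hmono : ∀ j, Monotone (f j))
    {S : Finset (Fin n)} (hS : S.Nonempty) {t : ℝ≥0} {e₁ e₂ : ℝ}
    (h1 : EqDistOn n f S t e₁) (h2 : EqDistOn n f S t e₂) : e₁ = e₂ := by
  by_contra hne
  wlog hlt : e₁ < e₂ generalizing e₁ e₂
  · exact this h2 h1 (Ne.symm hne) (lt_of_le_of_ne (not_lt.mp hlt) (Ne.symm hne))
  obtain ⟨ν, hsum, hval⟩ := h1
  obtain ⟨ν', hsum', hval'⟩ := h2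
  have hlt' : ∀ k ∈ S, ν k < ν' k := by
    intro k hk
    by_contra hle
    have : f k (ν' k) ≤ f k (ν k) := hmono k (not_lt.mp hle)
    rw [hval k hk, hval' k hk] at this
    exact absurd hlt (not_lt.mpr this)
  have : (∑ k ∈ S, ν k) < ∑ k ∈ S, ν' k := Finset.sum_lt_sum_of_nonempty hS hlt'
  rw [hsum, hsum'] at this
  exact lt_irrefl _ this

lemma singleton_memD (n : ℕ) (f : Fin n → ℝ≥0 → ℝ) (μ : Finset (Fin n) → ℝ≥0)
    (j : Fin n) : MemD n f μ Finset.univ {j} (f j (μ {j})) := by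
  have hinner : innerMass n μ {j} = μ {j} := by
    unfold innerMass
    have hfil : Finset.filter (fun R => R.Nonempty) ({j} : Finset (Fin n)).powerset = {{j}} := by
      ext R
      simp only [Finset.mem_filter, Finset.mem_powerset, Finset.subset_singleton_iff,
        Finset.nonempty_iff_ne_empty, Finset.mem_singleton]
      aesop
    rw [hfil, Finset.sum_singleton]
  have heq : EqDistOn n f {j} (innerMass n μ {j}) (f j (μ {j})) := by
    refine ⟨fun _ => μ {j}, ?_, ?_⟩
    · simp [hinner]
    · intro k hk; simp at hk; subst hk; rfl
  refine ⟨Finset.singleton_nonempty j, Finset.subset_univ _, heq, ?_⟩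
  intro S' hS' hS'ne
  have : S' = {j} := by
    rcases Finset.subset_singleton_iff.mp hS' with h | h
    · exact absurd h (Finset.nonempty_iff_ne_empty.mp hS'ne)
    · exact h
  subst this
  refine ⟨innerMass n μ {j}, ?_, heq⟩
  unfold innerMass touchMass
  apply Finset.sum_le_sum_of_subset
  intro R hR
  simp only [Finset.mem_filter] at hR ⊢
  refine ⟨hR.1, hR.2, ?_⟩
  rcases Finset.subset_singleton_iff.mp (Finset.mem_powerset.mp hR.1) with h | h
  · exact absurd h (Finset.nonempty_iff_ne_empty.mp hR.2)
  · subst h; simp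

/-- In every `n`-resource selection game (nondecreasing cost
functions) the set `D_G` is nonempty; consequently the maximum `h_G` is a
well-defined real number and `P_G` (the union of the maximizers) is nonempty. -/
theorem D_nonempty_hG_exists (n : ℕ) (hn : 0 < n) (f : Fin n → ℝ≥0 → ℝ)
    (μ : Finset (Fin n) → ℝ≥0) (hmono : ∀ j, Monotone (f j)) :
    (∃ S e, MemD n f μ Finset.univ S e) ∧
    ∃ hG : ℝ, IsHG n f μ Finset.univ hG ∧
      ∃ j : Fin n, ∃ S, MemD n f μ Finset.univ S hG ∧ j ∈ S := by
  classical
  obtain ⟨j₀⟩ : Nonempty (Fin n) := ⟨⟨0, hn⟩⟩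
  have hsj : ∀ j : Fin n, MemD n f μ Finset.univ {j} (f j (μ {j})) :=
    fun j => singleton_memD n f μ j
  -- candidates
  set cand : Finset (Finset (Fin n)) :=
    (Finset.univ : Finset (Fin n)).powerset.filter
      (fun S => ∃ e, MemD n f μ Finset.univ S e) with hcand
  have hj0mem : ({j₀} : Finset (Fin n)) ∈ cand := by
    simp only [hcand, Finset.mem_filter, Finset.mem_powerset]
    exact ⟨Finset.subset_univ _, ⟨_, hsj j₀⟩⟩
  set g : Finset (Fin n) → ℝ := fun S =>
    if h : ∃ e, MemD n f μ Finset.univ S e then h.choose else 0 with hg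
  have hgspec : ∀ S ∈ cand, MemD n f μ Finset.univ S (g S) := by
    intro S hS
    simp only [hcand, Finset.mem_filter] at hS
    have h := hS.2
    simp only [hg, dif_pos h]
    exact h.choose_spec
  set E := cand.image g with hE
  have hEne : E.Nonempty := ⟨g {j₀}, Finset.mem_image_of_mem g hj0mem⟩
  set hG := E.max' hEne with hhG
  have hGmem : hG ∈ E := E.max'_mem hEne
  obtain ⟨S₀, hS₀c, hgS₀⟩ := Finset.mem_image.mp hGmem
  have hmemD₀ : MemD n f μ Finset.univ S₀ hG := hgS₀ ▸ hgspec S₀ hS₀c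
  refine ⟨⟨{j₀}, _, hsj j₀⟩, hG, ⟨⟨S₀, hmemD₀⟩, ?_⟩, ?_⟩
  · intro S e hSe
    have hScand : S ∈ cand := by
      simp only [hcand, Finset.mem_filter, Finset.mem_powerset]
      exact ⟨Finset.subset_univ _, ⟨e, hSe⟩⟩
    have hgS : MemD n f μ Finset.univ S (g S) := hgspec S hScand
    have : e = g S := eqDist_unique n f hmono hSe.1 hSe.2.2.1 hgS.2.2.1
    rw [this]
    exact E.le_max' _ (Finset.mem_image_of_mem g hScand)
  · obtain ⟨j, hj⟩ := hmemD₀.1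
    exact ⟨j, S₀, hmemD₀, hj⟩
end

section
/- Let G be an n-resource selection game and let s be a Nash equilibrium of G. Let P^s = {j ∈ {1,…,n} : h_j^s = max_{i∈{1,…,n}} h_i^s} be the set of highest-costing resources in s. Then: (a) P^s = P_G; (b) h_j^s = h_G for every j ∈ P^s; and (c) s_j(R) = 0 for every j ∈ P^s and every nonempty type R ⊆ {1,…,n} that is not contained in P^s. -/
open scoped NNReal

namespace RSG

/-- A consumption profile in an `n`-resource selection game: each nonempty type
`R ⊆ [n]` distributes its mass `μ R` among the resources in `R`. -/
def IsProfile (n : ℕ) (μ : Finset (Fin n) → ℝ≥0) (s : Finset (Fin n) → Fin n → ℝ≥0) : Prop :=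
  (∀ R : Finset (Fin n), ∀ j : Fin n, j ∉ R → s R j = 0) ∧
  (∀ R : Finset (Fin n), R.Nonempty → ∑ j ∈ R, s R j = μ R)

/-- The load on resource `j` in profile `s`. -/
def load (n : ℕ) (s : Finset (Fin n) → Fin n → ℝ≥0) (j : Fin n) : ℝ≥0 :=
  ∑ R : Finset (Fin n), s R j

/-- The cost of resource `j` in profile `s`. -/
def cost (n : ℕ) (f : Fin n → ℝ≥0 → ℝ) (s : Finset (Fin n) → Fin n → ℝ≥0) (j : Fin n) : ℝ :=
  f j (load n s j)

/-- A Nash equilibrium. -/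
def IsNash (n : ℕ) (f : Fin n → ℝ≥0 → ℝ) (μ : Finset (Fin n) → ℝ≥0)
    (s : Finset (Fin n) → Fin n → ℝ≥0) : Prop :=
  IsProfile n μ s ∧
  ∀ R : Finset (Fin n), ∀ k ∈ R, 0 < s R k → ∀ j ∈ R, cost n f s k ≤ cost n f s j

/-- A strong Nash equilibrium: a Nash equilibrium `s` such that there is no
consumption profile `s' ≠ s` in which every player who strictly increases its
consumption of some resource `k` (i.e. `s' R k > s R k`) pays, at `k` in `s'`,
strictly less than the common equilibrium cost `h^R` of its type
(expressed via: less than `cost s j` for every `j` in the support of `s R`). -/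
def IsStrong (n : ℕ) (f : Fin n → ℝ≥0 → ℝ) (μ : Finset (Fin n) → ℝ≥0)
    (s : Finset (Fin n) → Fin n → ℝ≥0) : Prop :=
  IsNash n f μ s ∧
  ¬ ∃ s' : Finset (Fin n) → Fin n → ℝ≥0, IsProfile n μ s' ∧ s' ≠ s ∧
    ∀ R : Finset (Fin n), ∀ k : Fin n, s R k < s' R k →
      ∀ j : Fin n, 0 < s R j → cost n f s' k < cost n f s j

end RSG

open RSG

section Aux

variable {n : ℕ} {f : Fin n → ℝ≥0 → ℝ} {μ : Finset (Fin n) → ℝ≥0}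
  {s : Finset (Fin n) → Fin n → ℝ≥0} {Ps : Finset (Fin n)}

/-- If `R ⊆ T`, the sum of `s R` over `T` is the full mass `μ R`. -/
lemma rsg_sum_superset (hp : IsProfile n μ s) {R T : Finset (Fin n)}
    (hRT : R ⊆ T) (hR : R.Nonempty) : ∑ k ∈ T, s R k = μ R := by
  rw [← hp.2 R hR]
  exact (Finset.sum_subset hRT (fun k _ hk => hp.1 R k hk)).symm

/-- Part (c): types not contained in `Ps` do not consume from resources of `Ps`. -/
lemma rsg_partc (hs : IsNash n f μ s)
    (hPs : ∀ j : Fin n, j ∈ Ps ↔ ∀ i : Fin n, cost n f s i ≤ cost n f s j)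
    {R : Finset (Fin n)} (hR : ¬ R ⊆ Ps) {j : Fin n} (hj : j ∈ Ps) : s R j = 0 := by
  by_contra h
  have hjR : j ∈ R := by
    by_contra hjR
    exact h (hs.1.1 R j hjR)
  obtain ⟨i, hiR, hiP⟩ := Finset.not_subset.mp hR
  have h1 : cost n f s j ≤ cost n f s i :=
    hs.2 R j hjR (pos_iff_ne_zero.mpr h) i hiR
  obtain ⟨m, hm⟩ := not_forall.mp (fun hh => hiP ((hPs i).mpr hh))
  have h2 : cost n f s m ≤ cost n f s j := (hPs j).mp hj m
  have h3 : cost n f s i < cost n f s m := not_le.mp hm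
  linarith

/-- Sums of loads decompose by types. -/
lemma rsg_sum_load (T : Finset (Fin n)) :
    ∑ k ∈ T, load n s k = ∑ R : Finset (Fin n), ∑ k ∈ T, s R k := by
  simp only [load]
  exact Finset.sum_comm

lemma rsg_innerMass_le_sum_load (hp : IsProfile n μ s) (S : Finset (Fin n)) :
    innerMass n μ S ≤ ∑ k ∈ S, load n s k := by
  rw [rsg_sum_load]
  calc innerMass n μ S
      = ∑ R ∈ S.powerset.filter (fun R => R.Nonempty), ∑ k ∈ S, s R k := by
        refine Finset.sum_congr rfl (fun R hR => ?_)
        rw [Finset.mem_filter, Finset.mem_powerset] at hR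
        exact (rsg_sum_superset hp hR.1 hR.2).symm
    _ ≤ ∑ R : Finset (Fin n), ∑ k ∈ S, s R k :=
        Finset.sum_le_sum_of_subset (Finset.subset_univ _)

lemma rsg_sum_load_Ps (hs : IsNash n f μ s)
    (hPs : ∀ j : Fin n, j ∈ Ps ↔ ∀ i : Fin n, cost n f s i ≤ cost n f s j) :
    ∑ k ∈ Ps, load n s k = innerMass n μ Ps := by
  rw [rsg_sum_load]
  rw [show (∑ R : Finset (Fin n), ∑ k ∈ Ps, s R k)
      = ∑ R ∈ Finset.filter (fun R => R.Nonempty) Ps.powerset, ∑ k ∈ Ps, s R k from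
    (Finset.sum_subset (Finset.subset_univ _) (fun R _ hR => ?_)).symm]
  · exact Finset.sum_congr rfl (fun R hR => by
      rw [Finset.mem_filter, Finset.mem_powerset] at hR
      exact rsg_sum_superset hs.1 hR.1 hR.2)
  · rw [Finset.mem_filter, Finset.mem_powerset, not_and_or] at hR
    refine Finset.sum_eq_zero (fun k hk => ?_)
    rcases hR with hR | hR
    · exact rsg_partc hs hPs hR hk
    · rw [Finset.not_nonempty_iff_eq_empty] at hR
      subst hR
      exact hs.1.1 ∅ k (Finset.notMem_empty k)

lemma rsg_sum_load_le_touch (hs : IsNash n f μ s)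
    (hPs : ∀ j : Fin n, j ∈ Ps ↔ ∀ i : Fin n, cost n f s i ≤ cost n f s j)
    {S' : Finset (Fin n)} (hS' : S' ⊆ Ps) :
    ∑ k ∈ S', load n s k ≤ touchMass n μ Ps S' := by
  rw [rsg_sum_load]
  rw [show (∑ R : Finset (Fin n), ∑ k ∈ S', s R k)
      = ∑ R ∈ Finset.filter (fun R => R.Nonempty ∧ (R ∩ S').Nonempty) Ps.powerset,
          ∑ k ∈ S', s R k from
    (Finset.sum_subset (Finset.subset_univ _) (fun R _ hR => ?_)).symm]
  · refine Finset.sum_le_sum (fun R hR => ?_)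
    rw [Finset.mem_filter, Finset.mem_powerset] at hR
    rw [← rsg_sum_superset hs.1 hR.1 hR.2.1]
    calc ∑ k ∈ S', s R k
        = ∑ k ∈ S' ∩ R, s R k :=
          (Finset.sum_subset Finset.inter_subset_left (fun k hkS hk =>
            hs.1.1 R k (fun hkR => hk (Finset.mem_inter.mpr ⟨hkS, hkR⟩)))).symm
      _ ≤ ∑ k ∈ Ps, s R k := Finset.sum_le_sum_of_subset
          (Finset.inter_subset_left.trans hS')
  · rw [Finset.mem_filter, Finset.mem_powerset, not_and_or] at hR
    refine Finset.sum_eq_zero (fun k hk => ?_)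
    rcases hR with hR | hR
    · exact rsg_partc hs hPs hR (hS' hk)
    · rw [not_and_or] at hR
      rcases hR with hR | hR
      · rw [Finset.not_nonempty_iff_eq_empty] at hR
        subst hR
        exact hs.1.1 ∅ k (Finset.notMem_empty k)
      · rw [Finset.not_nonempty_iff_eq_empty] at hR
        refine hs.1.1 R k (fun hkR => ?_)
        have : k ∈ R ∩ S' := Finset.mem_inter.mpr ⟨hkR, hk⟩
        simp [hR] at this

lemma rsg_touch_le_sum_load (hs : IsNash n f μ s)
    (hPs : ∀ j : Fin n, j ∈ Ps ↔ ∀ i : Fin n, cost n f s i ≤ cost n f s j)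
    (S : Finset (Fin n)) :
    touchMass n μ S (S \ Ps) ≤ ∑ k ∈ S \ Ps, load n s k := by
  rw [rsg_sum_load]
  calc touchMass n μ S (S \ Ps)
      = ∑ R ∈ S.powerset.filter (fun R => R.Nonempty ∧ (R ∩ (S \ Ps)).Nonempty),
          ∑ k ∈ S \ Ps, s R k := by
        refine Finset.sum_congr rfl (fun R hR => ?_)
        rw [Finset.mem_filter, Finset.mem_powerset] at hR
        have hRP : ¬ R ⊆ Ps := by
          obtain ⟨x, hx⟩ := hR.2.2
          rw [Finset.mem_inter, Finset.mem_sdiff] at hx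
          exact fun hc => hx.2.2 (hc hx.1)
        rw [← hs.1.2 R hR.2.1]
        calc ∑ k ∈ R, s R k
            = ∑ k ∈ R ∩ (S \ Ps), s R k :=
              (Finset.sum_subset Finset.inter_subset_left (fun k hkR hk => by
                have hkPs : k ∈ Ps := by
                  by_contra hkP
                  exact hk (Finset.mem_inter.mpr ⟨hkR,
                    Finset.mem_sdiff.mpr ⟨hR.1 hkR, hkP⟩⟩)
                exact rsg_partc hs hPs hRP hkPs)).symm
          _ = ∑ k ∈ S \ Ps, s R k :=
              Finset.sum_subset Finset.inter_subset_right (fun k hkT hk =>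
                hs.1.1 R k (fun hkR => hk (Finset.mem_inter.mpr ⟨hkR, hkT⟩)))
    _ ≤ ∑ R : Finset (Fin n), ∑ k ∈ S \ Ps, s R k :=
        Finset.sum_le_sum_of_subset (Finset.subset_univ _)

end Aux

/-- In every Nash equilibrium `s`: (a) the set
`P^s = argmax_j h_j^s` of highest-costing resources equals `P_G`; (b) the cost
of every resource in `P^s` is `h_G`; (c) no type not contained in `P^s`
consumes from any resource of `P^s`. -/
theorem highest_costing_resources (n : ℕ) (f : Fin n → ℝ≥0 → ℝ)
    (μ : Finset (Fin n) → ℝ≥0) (hmono : ∀ j, Monotone (f j))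
    (s : Finset (Fin n) → Fin n → ℝ≥0) (hs : IsNash n f μ s)
    (hG : ℝ) (hhG : IsHG n f μ Finset.univ hG)
    (Ps : Finset (Fin n))
    (hPs : ∀ j : Fin n, j ∈ Ps ↔ ∀ i : Fin n, cost n f s i ≤ cost n f s j) :
    (∀ j : Fin n, j ∈ Ps ↔ ∃ S, MemD n f μ Finset.univ S hG ∧ j ∈ S) ∧
    (∀ j ∈ Ps, cost n f s j = hG) ∧
    (∀ R : Finset (Fin n), R.Nonempty → ¬ R ⊆ Ps → ∀ j ∈ Ps, s R j = 0) := by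
  classical
  obtain ⟨S₀, hS₀⟩ := hhG.1
  obtain ⟨x₀, _⟩ := hS₀.1
  obtain ⟨j₀, _, hj₀⟩ := Finset.exists_max_image Finset.univ (cost n f s)
    ⟨x₀, Finset.mem_univ x₀⟩
  have hj₀P : j₀ ∈ Ps := (hPs j₀).mpr (fun i => hj₀ i (Finset.mem_univ i))
  set hstar := cost n f s j₀ with hhstar
  have hmax : ∀ i, cost n f s i ≤ hstar := (hPs j₀).mp hj₀P
  have hcostPs : ∀ j ∈ Ps, cost n f s j = hstar :=
    fun j hj => le_antisymm (hmax j) ((hPs j).mp hj j₀)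
  have hlt : ∀ k, k ∉ Ps → cost n f s k < hstar := by
    intro k hk
    obtain ⟨i, hi⟩ := not_forall.mp (fun hh => hk ((hPs k).mpr hh))
    exact lt_of_lt_of_le (not_le.mp hi) (hmax i)
  have hDPs : MemD n f μ Finset.univ Ps hstar := by
    refine ⟨⟨j₀, hj₀P⟩, Finset.subset_univ _, ⟨load n s, rsg_sum_load_Ps hs hPs,
      fun k hk => hcostPs k hk⟩, fun S' hS' hS'ne => ?_⟩
    exact ⟨∑ k ∈ S', load n s k, rsg_sum_load_le_touch hs hPs hS',
      load n s, rfl, fun k hk => hcostPs k (hS' hk)⟩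
  have h1 : hstar ≤ hG := hhG.2 Ps hstar hDPs
  have h2 : hG ≤ hstar := by
    by_contra hcon
    push_neg at hcon
    obtain ⟨ν, hν1, hν2⟩ := hS₀.2.2.1
    have hltν : ∀ k ∈ S₀, load n s k < ν k := by
      intro k hk
      by_contra h
      push_neg at h
      have := hmono k h
      have h3 : f k (ν k) = hG := hν2 k hk
      have h4 : cost n f s k ≤ hstar := hmax k
      rw [h3] at this
      exact absurd (this.trans h4) (not_le.mpr hcon)
    have hA : innerMass n μ S₀ ≤ ∑ k ∈ S₀, load n s k :=
      rsg_innerMass_le_sum_load hs.1 S₀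
    have hB : ∑ k ∈ S₀, load n s k < ∑ k ∈ S₀, ν k :=
      Finset.sum_lt_sum_of_nonempty hS₀.1 hltν
    rw [hν1] at hB
    exact absurd hA (not_le.mpr hB)
  have hGeq : hG = hstar := le_antisymm h2 h1
  refine ⟨fun j => ⟨fun hj => ⟨Ps, by rwa [hGeq], hj⟩, ?_⟩,
    fun j hj => (hcostPs j hj).trans hGeq.symm,
    fun R _ hR j hj => rsg_partc hs hPs hR hj⟩
  rintro ⟨S, hSD, hjS⟩
  by_contra hjP
  have hjS' : j ∈ S \ Ps := Finset.mem_sdiff.mpr ⟨hjS, hjP⟩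
  obtain ⟨t, ht, ν, hν1, hν2⟩ := hSD.2.2.2 (S \ Ps) Finset.sdiff_subset ⟨j, hjS'⟩
  have hltν : ∀ k ∈ S \ Ps, load n s k < ν k := by
    intro k hk
    have hkP : k ∉ Ps := (Finset.mem_sdiff.mp hk).2
    by_contra h
    push_neg at h
    have := hmono k h
    have h3 : f k (ν k) = hG := hν2 k hk
    rw [h3, hGeq] at this
    exact absurd (lt_of_le_of_lt this (hlt k hkP)) (lt_irrefl _)
  have hB : ∑ k ∈ S \ Ps, load n s k < ∑ k ∈ S \ Ps, ν k :=
    Finset.sum_lt_sum_of_nonempty ⟨j, hjS'⟩ hltν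
  rw [hν1] at hB
  have hC : touchMass n μ S (S \ Ps) ≤ ∑ k ∈ S \ Ps, load n s k :=
    rsg_touch_le_sum_load hs hPs S
  exact absurd (ht.trans hC) (not_le.mpr hB)
end

section
/- Let G be an n-resource selection game. Then: (a) the maximum of E_G(S) over all nonempty S ⊆ {1,…,n} for which E_G(S) is defined is attained and is a real number; (b) if moreover f_1, …, f_n are continuous, then h_G equals this maximum, i.e., h_G = max{E_G(S) : S ⊆ {1,…,n} nonempty, E_G(S) defined}. -/
/-!
Part (a): a level `E_G(S)` is unique when defined, since a strictly higher level forces strictly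
more mass onto every resource of `S`; so there are finitely many levels, and one of them is largest.

Part (b): every element of `D_G` has a defined level, so `h_G ≤ M`. Conversely, let `S` reach
the largest level `M` through a distribution `ν`. If every `T ⊆ S` satisfies
`innerMass T ≤ ν(T)`, then `S ∈ D_G`, witnessed by `t = ν(S')`. Otherwise some `T ⊊ S` satisfies
`ν(T) < innerMass T`. With continuous costs, every larger mass can be equalized on `T`: maximize
the total mass over the compact set of equalizing distributions of mass at most `innerMass T`,
and use the intermediate value theorem to get past any maximum below it. The level reached by
`T` is then at least `M` by monotonicity and at most `M` by maximality, so we may recurse on `T`.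
-/


open scoped NNReal

section Equalizing

variable {ι : Type*} [Fintype ι] [Nonempty ι] {f : ι → ℝ≥0 → ℝ}

lemma exists_equalizing_sum_gt (hmono : ∀ i, Monotone (f i)) (hcont : ∀ i, Continuous (f i))
    {x : ι → ℝ≥0} {c : ℝ} (hx : ∀ i, f i (x i) = c) {t : ℝ≥0} (ht : ∑ i, x i < t) :
    ∃ y : ι → ℝ≥0, ∃ c', (∀ i, f i (y i) = c') ∧ ∑ i, y i ≤ t ∧ ∑ i, x i < ∑ i, y i := by
  classical
  set δ : ℝ≥0 := (t - ∑ i, x i) / Fintype.card ι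
  have hcard : (Fintype.card ι : ℝ≥0) ≠ 0 := by exact_mod_cast Fintype.card_ne_zero
  have hδ : 0 < δ := div_pos (tsub_pos_of_lt ht) (pos_iff_ne_zero.2 hcard)
  have hsum : ∑ i, (x i + δ) = t := by
    rw [Finset.sum_add_distrib, Finset.sum_const, Finset.card_univ, nsmul_eq_mul,
      mul_div_cancel₀ _ hcard, add_tsub_cancel_of_le ht.le]
  -- Raise every coordinate to the lowest level `f i₀ (x i₀ + δ)` reachable within slack `δ`;
  -- the coordinate `i₀` attaining it gains the full `δ`.
  obtain ⟨i₀, -, hi₀⟩ :=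
    Finset.exists_min_image Finset.univ (fun i => f i (x i + δ)) Finset.univ_nonempty
  have hivt : ∀ i, ∃ z ∈ Set.Icc (x i) (x i + δ), f i z = f i₀ (x i₀ + δ) := fun i =>
    intermediate_value_Icc le_self_add (hcont i).continuousOn
      ⟨hx i ▸ hx i₀ ▸ hmono i₀ le_self_add, hi₀ i (Finset.mem_univ i)⟩
  choose z hz hfz using hivt
  set y := Function.update z i₀ (x i₀ + δ)
  have hy : ∀ i, y i ∈ Set.Icc (x i) (x i + δ) := by
    intro i
    rcases eq_or_ne i i₀ with rfl | hi
    · simp [y]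
    · simpa [y, hi] using hz i
  refine ⟨y, f i₀ (x i₀ + δ), fun i => ?_, ?_, ?_⟩
  · rcases eq_or_ne i i₀ with rfl | hi
    · simp [y]
    · simpa [y, hi] using hfz i
  · exact hsum ▸ Finset.sum_le_sum fun i _ => (hy i).2
  · exact Finset.sum_lt_sum (fun i _ => (hy i).1) ⟨i₀, Finset.mem_univ _, by simpa [y]⟩

lemma exists_equalizing_of_sum_le (hmono : ∀ i, Monotone (f i)) (hcont : ∀ i, Continuous (f i))
    {x : ι → ℝ≥0} {c : ℝ} (hx : ∀ i, f i (x i) = c) {t : ℝ≥0} (ht : ∑ i, x i ≤ t) :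
    ∃ y : ι → ℝ≥0, ∃ c', (∀ i, f i (y i) = c') ∧ ∑ i, y i = t := by
  obtain ⟨i₀⟩ := ‹Nonempty ι›
  set C : Set (ι → ℝ≥0) := {y | ∑ i, y i ≤ t ∧ ∀ i, f i (y i) = f i₀ (y i₀)}
  have hCclosed : IsClosed C := by
    simp only [C, Set.ofPred_and, Set.ofPred_forall]
    exact (isClosed_le (by fun_prop) continuous_const).inter
      (isClosed_iInter fun i => isClosed_eq (by fun_prop) (by fun_prop))
  have hC : IsCompact C :=
    (isCompact_univ_pi fun _ => isCompact_Icc (a := 0) (b := t)).of_isClosed_subset hCclosed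
      fun y hy => Set.mem_univ_pi.2 fun i =>
        ⟨zero_le, (Finset.single_le_sum (fun _ _ => zero_le) (Finset.mem_univ i)).trans hy.1⟩
  obtain ⟨y, hyC, hymax⟩ := hC.exists_isMaxOn ⟨x, ht, fun i => by rw [hx, hx]⟩
    (continuous_finsetSum _ fun i _ => continuous_apply i).continuousOn
  refine ⟨y, _, hyC.2, hyC.1.antisymm (not_lt.1 fun hlt => ?_)⟩
  obtain ⟨z, c', hz, hzt, hyz⟩ := exists_equalizing_sum_gt hmono hcont hyC.2 hlt
  exact (isMaxOn_iff.1 hymax z ⟨hzt, fun i => by rw [hz, hz]⟩).not_gt hyz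

end Equalizing

section ResourceSelection

variable {n : ℕ} {f : Fin n → ℝ≥0 → ℝ} {μ : Finset (Fin n) → ℝ≥0}

lemma EqDistOn.mass_lt_of_lt (hmono : ∀ j, Monotone (f j)) {S : Finset (Fin n)}
    (hS : S.Nonempty) {s t : ℝ≥0} {e e' : ℝ} (hs : EqDistOn n f S s e)
    (ht : EqDistOn n f S t e') (he : e < e') : s < t := by
  obtain ⟨ν, rfl, hν⟩ := hs
  obtain ⟨ν', rfl, hν'⟩ := ht
  refine Finset.sum_lt_sum_of_nonempty hS fun k hk => lt_of_not_ge fun hle => ?_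
  have := hmono k hle
  rw [hν k hk, hν' k hk] at this
  exact this.not_gt he

lemma EqDistOn.unique (hmono : ∀ j, Monotone (f j)) {S : Finset (Fin n)} (hS : S.Nonempty)
    {t : ℝ≥0} {e e' : ℝ} (h : EqDistOn n f S t e) (h' : EqDistOn n f S t e') : e = e' :=
  le_antisymm (not_lt.1 fun hlt => (h'.mass_lt_of_lt hmono hS h hlt).false)
    (not_lt.1 fun hlt => (h.mass_lt_of_lt hmono hS h' hlt).false)

lemma EqDistOn.exists_of_le (hmono : ∀ j, Monotone (f j)) (hcont : ∀ j, Continuous (f j))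
    {T : Finset (Fin n)} (hT : T.Nonempty) {s t : ℝ≥0} {e : ℝ} (h : EqDistOn n f T s e)
    (hst : s ≤ t) : ∃ e', EqDistOn n f T t e' := by
  obtain ⟨ν, rfl, hν⟩ := h
  have : Nonempty T := hT.to_subtype
  obtain ⟨y, e', hy, hyt⟩ := exists_equalizing_of_sum_le (f := fun k : T => f k)
    (fun k => hmono k) (fun k => hcont k) (x := fun k => ν k) (fun k => hν k k.2)
    ((Finset.sum_coe_sort T ν).trans_le hst)
  refine ⟨e', fun k => if hk : k ∈ T then y ⟨k, hk⟩ else 0, ?_,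
    fun k hk => by simpa [hk] using hy ⟨k, hk⟩⟩
  rw [← hyt, ← Finset.sum_coe_sort T]
  exact Finset.sum_congr rfl fun k _ => dif_pos k.2

lemma innerMass_eq_touchMass_add (μ : Finset (Fin n) → ℝ≥0) (S S' : Finset (Fin n)) :
    innerMass n μ S = touchMass n μ S S' + innerMass n μ (S \ S') := by
  unfold innerMass touchMass
  rw [← Finset.sum_filter_add_sum_filter_not _ (fun R => (R ∩ S').Nonempty), Finset.filter_filter,
    Finset.filter_filter]
  congr 2
  ext R
  simp only [Finset.mem_filter, Finset.mem_powerset, Finset.subset_sdiff,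
    Finset.not_nonempty_iff_eq_empty, ← Finset.disjoint_iff_inter_eq_empty]
  tauto

lemma memD_of_forall_innerMass_le {V S : Finset (Fin n)} (hS : S.Nonempty) (hSV : S ⊆ V)
    {ν : Fin n → ℝ≥0} {e : ℝ} (hνS : ∑ k ∈ S, ν k = innerMass n μ S)
    (hν : ∀ k ∈ S, f k (ν k) = e) (hsub : ∀ T ⊆ S, innerMass n μ T ≤ ∑ k ∈ T, ν k) :
    MemD n f μ V S e := by
  refine ⟨hS, hSV, ⟨ν, hνS, hν⟩, fun S' hS' _ =>
    ⟨∑ k ∈ S', ν k, ?_, ν, rfl, fun k hk => hν k (hS' hk)⟩⟩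
  refine le_of_add_le_add_right (a := innerMass n μ (S \ S')) ?_
  calc ∑ k ∈ S', ν k + innerMass n μ (S \ S')
      ≤ ∑ k ∈ S', ν k + ∑ k ∈ S \ S', ν k := by gcongr; exact hsub _ Finset.sdiff_subset
    _ = innerMass n μ S := by rw [add_comm, Finset.sum_sdiff hS', hνS]
    _ = touchMass n μ S S' + innerMass n μ (S \ S') := innerMass_eq_touchMass_add μ S S'

-- The values of `E_G(S)` over the nonempty `S` for which it is defined.
variable (n f μ) in
def definedLevels : Set ℝ :=
  {e | ∃ S : Finset (Fin n), S.Nonempty ∧ EqDistOn n f S (innerMass n μ S) e}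

lemma exists_isGreatest_definedLevels (hn : 0 < n) (hmono : ∀ j, Monotone (f j)) :
    ∃ M, IsGreatest (definedLevels n f μ) M := by
  have hfin : (definedLevels n f μ).Finite := by
    refine (Set.finite_iUnion fun S : Finset (Fin n) => Set.Subsingleton.finite
      (s := {e | S.Nonempty ∧ EqDistOn n f S (innerMass n μ S) e})
      fun a ha b hb => ha.2.unique hmono ha.1 hb.2).subset fun e ⟨S, hS⟩ => Set.mem_iUnion.2 ⟨S, hS⟩
  let i : Fin n := ⟨0, hn⟩
  exact hfin.isCompact.exists_isGreatest
    ⟨f i (innerMass n μ {i}), {i}, Finset.singleton_nonempty i, fun _ => innerMass n μ {i},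
      by simp, by simp⟩

lemma exists_memD_of_isGreatest (hmono : ∀ j, Monotone (f j)) (hcont : ∀ j, Continuous (f j))
    {M : ℝ} (hM : IsGreatest (definedLevels n f μ) M) : ∃ S, MemD n f μ Finset.univ S M := by
  obtain ⟨⟨S, hS, hSM⟩, hmax⟩ := hM
  induction S using Finset.strongInduction with
  | H S ih =>
  obtain ⟨ν, hνS, hν⟩ := hSM
  by_cases hsub : ∀ T ⊆ S, innerMass n μ T ≤ ∑ k ∈ T, ν k
  · exact ⟨S, memD_of_forall_innerMass_le hS (Finset.subset_univ S) hνS hν hsub⟩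
  push Not at hsub
  obtain ⟨T, hTS, hT⟩ := hsub
  have hTne : T.Nonempty := Finset.nonempty_iff_ne_empty.2 fun h => by
    simp [h, innerMass, Finset.filter_singleton] at hT
  have hTS' : T ⊂ S := hTS.ssubset_of_ne fun h => hT.ne (h ▸ hνS)
  have hνT : EqDistOn n f T (∑ k ∈ T, ν k) M := ⟨ν, rfl, fun k hk => hν k (hTS hk)⟩
  obtain ⟨e, he⟩ := hνT.exists_of_le hmono hcont hTne hT.le
  have heM : e = M := (hmax ⟨T, hTne, he⟩).antisymm
    (not_lt.1 fun hlt => (he.mass_lt_of_lt hmono hTne hνT hlt).not_gt hT)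
  exact ih T hTS' hTne (heM ▸ he)

end ResourceSelection

/-- (a) The maximum of `E_G(S)` over all nonempty `S` for
which `E_G(S)` is defined is attained and is a real number; (b) if the cost
functions are continuous, then `h_G` equals this maximum. -/
theorem hG_eq_max_over_all (n : ℕ) (hn : 0 < n) (f : Fin n → ℝ≥0 → ℝ)
    (μ : Finset (Fin n) → ℝ≥0) (hmono : ∀ j, Monotone (f j)) :
    (∃ M : ℝ,
      (∃ S : Finset (Fin n), S.Nonempty ∧ EqDistOn n f S (innerMass n μ S) M) ∧
      (∀ (S : Finset (Fin n)) (e : ℝ), S.Nonempty →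
        EqDistOn n f S (innerMass n μ S) e → e ≤ M)) ∧
    ((∀ j, Continuous (f j)) →
      ∀ hG M : ℝ, IsHG n f μ Finset.univ hG →
        ((∃ S : Finset (Fin n), S.Nonempty ∧ EqDistOn n f S (innerMass n μ S) M) ∧
         (∀ (S : Finset (Fin n)) (e : ℝ), S.Nonempty →
           EqDistOn n f S (innerMass n μ S) e → e ≤ M)) →
        hG = M) := by
  refine ⟨?_, fun hcont hG M hhG ⟨hM, hMmax⟩ => ?_⟩
  · obtain ⟨M, hM, hMmax⟩ := exists_isGreatest_definedLevels (μ := μ) hn hmono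
    exact ⟨M, hM, fun S e hS he => hMmax ⟨S, hS, he⟩⟩
  · obtain ⟨⟨S, hS⟩, hhGmax⟩ := hhG
    obtain ⟨S₀, hS₀⟩ := exists_memD_of_isGreatest hmono hcont
      ⟨hM, fun e ⟨S, hS, he⟩ => hMmax S e hS he⟩
    exact (hMmax S hG hS.1 hS.2.2.1).antisymm (hhGmax S₀ M hS₀)
end

section
/- Let G be an n-resource selection game with continuous (nondecreasing) cost functions f_1, …, f_n. Then there exists a consumption profile s in the restricted resource selection game on the resource set P_G — the game with cost functions (f_j)_{j∈P_G} and masses (μ^R)_{∅≠R⊆P_G} — such that h_j^s = h_G for every j ∈ P_G. -/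
/-!
Minimizing Rosenthal's potential `∑ⱼ ∫₀^{ℓⱼ} fⱼ` over the compact set of consumption profiles of
the game restricted to `P_G` yields a Wardrop equilibrium `s`: a type uses a resource only if no
resource of that type is cheaper. The top cost level of `s` is then closed under the types using
it, which makes it a member of `D_G`, so the maximal cost on `P_G` is at most `h_G`. Dually, a
type touching the bottom cost level puts all its mass there; for `S ∈ D_G` meeting that level,
`M_G(S) = ∅` then forces the minimal cost to be at least `h_G`.
-/

open scoped NNReal

open scoped Topology
open Finset Function

namespace SelectionGame

noncomputable def primitive (f : ℝ≥0 → ℝ) (x : ℝ≥0) : ℝ := ∫ t in (0 : ℝ)..x, f t.toNNReal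

section Primitive

variable {f : ℝ≥0 → ℝ}

lemma intervalIntegrable_comp_toNNReal (hf : Monotone f) (a b : ℝ) :
    IntervalIntegrable (fun t : ℝ => f t.toNNReal) MeasureTheory.volume a b :=
  (hf.comp fun _ _ h => Real.toNNReal_le_toNNReal h).intervalIntegrable

lemma continuous_primitive (hf : Monotone f) : Continuous (primitive f) :=
  (intervalIntegral.continuous_primitive (intervalIntegrable_comp_toNNReal hf) 0).comp
    NNReal.continuous_coe

lemma primitive_add_sub (hf : Monotone f) (a ε : ℝ≥0) :
    primitive f (a + ε) - primitive f a = ∫ t in (a : ℝ)..(a + ε : ℝ≥0), f t.toNNReal :=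
  intervalIntegral.integral_interval_sub_left (intervalIntegrable_comp_toNNReal hf _ _)
    (intervalIntegrable_comp_toNNReal hf _ _)

lemma mul_le_primitive_add_sub (hf : Monotone f) (a ε : ℝ≥0) :
    ε * f a ≤ primitive f (a + ε) - primitive f a := by
  rw [primitive_add_sub hf]
  have hle : (a : ℝ) ≤ (a + ε : ℝ≥0) := by simp
  simpa using intervalIntegral.integral_mono_on hle intervalIntegrable_const
    (intervalIntegrable_comp_toNNReal hf _ _)
    fun t ht => hf (Real.le_toNNReal_iff_coe_le (a.2.trans ht.1) |>.2 ht.1)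

lemma primitive_add_sub_le (hf : Monotone f) (a ε : ℝ≥0) :
    primitive f (a + ε) - primitive f a ≤ ε * f (a + ε) := by
  rw [primitive_add_sub hf]
  have hle : (a : ℝ) ≤ (a + ε : ℝ≥0) := by simp
  simpa using intervalIntegral.integral_mono_on hle
    (intervalIntegrable_comp_toNNReal hf _ _) intervalIntegrable_const
    fun t ht => hf (Real.toNNReal_le_iff_le_coe.2 ht.2)

end Primitive

section Profile

variable {ι : Type*} {μ : Finset ι → ℝ≥0} {P : Finset ι} {s : Finset ι → ι → ℝ≥0}

def IsProfileOn (μ : Finset ι → ℝ≥0) (P : Finset ι) (s : Finset ι → ι → ℝ≥0) : Prop :=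
  (∀ R j, j ∉ R → s R j = 0) ∧ (∀ R, R.Nonempty → R ⊆ P → ∑ j ∈ R, s R j = μ R) ∧
    (∀ R, ¬ R ⊆ P → ∀ j, s R j = 0)

lemma IsProfileOn.mem_of_ne_zero (hs : IsProfileOn μ P s) {R : Finset ι} {j : ι}
    (h : s R j ≠ 0) : j ∈ R :=
  by_contra fun hj => h (hs.1 R j hj)

lemma IsProfileOn.subset_of_ne_zero (hs : IsProfileOn μ P s) {R : Finset ι} {j : ι}
    (h : s R j ≠ 0) : R ⊆ P :=
  by_contra fun hR => h (hs.2.2 R hR j)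

variable [Fintype ι]

def load (s : Finset ι → ι → ℝ≥0) (j : ι) : ℝ≥0 := ∑ R, s R j

def IsWardrop (f : ι → ℝ≥0 → ℝ) (s : Finset ι → ι → ℝ≥0) : Prop :=
  ∀ R j k, k ∈ R → s R j ≠ 0 → f j (load s j) ≤ f k (load s k)

lemma le_load (s : Finset ι → ι → ℝ≥0) (R : Finset ι) (j : ι) : s R j ≤ load s j :=
  single_le_sum (f := fun R => s R j) (fun _ _ => zero_le) (mem_univ R)

lemma sum_load (s : Finset ι → ι → ℝ≥0) (T : Finset ι) :
    ∑ j ∈ T, load s j = ∑ R, ∑ j ∈ T, s R j :=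
  sum_comm

namespace IsProfileOn

lemma sum_eq_of_support_subset (hs : IsProfileOn μ P s) {R T : Finset ι} (hR : R.Nonempty)
    (hRP : R ⊆ P) (hT : ∀ j, s R j ≠ 0 → j ∈ T) : ∑ j ∈ T, s R j = μ R := by
  rw [← hs.2.1 R hR hRP, sum_subset (subset_univ T) fun j _ hj => not_not.1 (mt (hT j) hj),
    sum_subset (subset_univ R) fun j _ hj => hs.1 R j hj]

lemma sum_load_eq (hs : IsProfileOn μ P s) {T : Finset ι} (hTP : T ⊆ P)
    (hT : ∀ R j, j ∈ T → s R j ≠ 0 → R ⊆ T) :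
    ∑ j ∈ T, load s j = ∑ R ∈ T.powerset.filter (fun R => R.Nonempty), μ R := by
  rw [sum_load, ← sum_subset (subset_univ (T.powerset.filter fun R => R.Nonempty))]
  · refine sum_congr rfl fun R hR => ?_
    obtain ⟨hRT, hR⟩ := mem_filter.1 hR
    exact hs.sum_eq_of_support_subset hR ((mem_powerset.1 hRT).trans hTP)
      fun j hj => mem_powerset.1 hRT (hs.mem_of_ne_zero hj)
  · refine fun R _ hR => sum_eq_zero fun j hj => by_contra fun h => hR ?_
    exact mem_filter.2 ⟨mem_powerset.2 (hT R j hj h), j, hs.mem_of_ne_zero h⟩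

variable [DecidableEq ι]

lemma sum_load_le (hs : IsProfileOn μ P s) {T S' : Finset ι} (hTP : T ⊆ P)
    (hT : ∀ R j, j ∈ T → s R j ≠ 0 → R ⊆ T) (hS' : S' ⊆ T) :
    ∑ j ∈ S', load s j ≤
      ∑ R ∈ T.powerset.filter (fun R => R.Nonempty ∧ (R ∩ S').Nonempty), μ R := by
  rw [sum_load,
    ← sum_subset (subset_univ (T.powerset.filter fun R => R.Nonempty ∧ (R ∩ S').Nonempty))]
  · refine sum_le_sum fun R hR => ?_
    obtain ⟨hRT, hR, -⟩ := mem_filter.1 hR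
    calc ∑ j ∈ S', s R j ≤ ∑ j ∈ T, s R j := sum_le_sum_of_subset hS'
      _ = μ R := hs.sum_eq_of_support_subset hR ((mem_powerset.1 hRT).trans hTP)
          fun j hj => mem_powerset.1 hRT (hs.mem_of_ne_zero hj)
  · refine fun R _ hR => sum_eq_zero fun j hj => by_contra fun h => hR ?_
    have hjR := hs.mem_of_ne_zero h
    exact mem_filter.2 ⟨mem_powerset.2 (hT R j (hS' hj) h), ⟨j, hjR⟩, j, mem_inter.2 ⟨hjR, hj⟩⟩

lemma le_sum_load (hs : IsProfileOn μ P s) {S S' : Finset ι} (hSP : S ⊆ P)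
    (hS' : ∀ R ⊆ S, (R ∩ S').Nonempty → ∀ j, s R j ≠ 0 → j ∈ S') :
    ∑ R ∈ S.powerset.filter (fun R => R.Nonempty ∧ (R ∩ S').Nonempty), μ R ≤
      ∑ j ∈ S', load s j := by
  rw [sum_load]
  calc ∑ R ∈ S.powerset.filter (fun R => R.Nonempty ∧ (R ∩ S').Nonempty), μ R
      = ∑ R ∈ S.powerset.filter (fun R => R.Nonempty ∧ (R ∩ S').Nonempty), ∑ j ∈ S', s R j :=
        sum_congr rfl fun R hR => by
          obtain ⟨hRS, hR, hRS'⟩ := mem_filter.1 hR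
          exact (hs.sum_eq_of_support_subset hR ((mem_powerset.1 hRS).trans hSP)
            (hS' R (mem_powerset.1 hRS) hRS')).symm
    _ ≤ ∑ R, ∑ j ∈ S', s R j := sum_le_sum_of_subset (subset_univ _)

end IsProfileOn

end Profile

section Potential

variable {ι : Type*} [DecidableEq ι]

def shift (v : ι → ℝ≥0) (j k : ι) (ε : ℝ≥0) : ι → ℝ≥0 :=
  update (update v j (v j - ε)) k (v k + ε)

variable {v : ι → ℝ≥0} {i j k : ι} {ε : ℝ≥0}

lemma shift_apply_left (hjk : j ≠ k) : shift v j k ε j = v j - ε := by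
  simp [shift, hjk]

lemma shift_apply_right : shift v j k ε k = v k + ε := by
  simp [shift]

lemma shift_apply_of_ne (hij : i ≠ j) (hik : i ≠ k) : shift v j k ε i = v i := by
  simp [shift, hij, hik]

lemma sum_comp_shift {M : Type*} [AddCommMonoid M] (g : ι → ℝ≥0 → M) {T : Finset ι}
    (hj : j ∈ T) (hk : k ∈ T) (hjk : j ≠ k) :
    ∑ i ∈ T, g i (shift v j k ε i) + (g j (v j) + g k (v k)) =
      ∑ i ∈ T, g i (v i) + (g j (v j - ε) + g k (v k + ε)) := by
  have hjkT : {j, k} ⊆ T := insert_subset hj (singleton_subset_iff.2 hk)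
  have hrest : ∑ i ∈ T \ {j, k}, g i (shift v j k ε i) = ∑ i ∈ T \ {j, k}, g i (v i) :=
    sum_congr rfl fun i hi => by
      simp only [mem_sdiff, mem_insert, mem_singleton, not_or] at hi
      rw [shift_apply_of_ne hi.2.1 hi.2.2]
  rw [← sum_sdiff hjkT, ← sum_sdiff hjkT (f := fun i => g i (v i)), sum_pair hjk, sum_pair hjk,
    shift_apply_left hjk, shift_apply_right, hrest]
  abel

lemma sum_shift {T : Finset ι} (hj : j ∈ T) (hk : k ∈ T) (hjk : j ≠ k) (hε : ε ≤ v j) :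
    ∑ i ∈ T, shift v j k ε i = ∑ i ∈ T, v i := by
  have h := sum_comp_shift (v := v) (ε := ε) (fun _ x => x) hj hk hjk
  rw [show v j - ε + (v k + ε) = v j + v k by
    rw [add_left_comm, tsub_add_cancel_of_le hε, add_comm]] at h
  exact add_right_cancel h

def transfer (s : Finset ι → ι → ℝ≥0) (R : Finset ι) (j k : ι) (ε : ℝ≥0) :
    Finset ι → ι → ℝ≥0 :=
  update s R (shift (s R) j k ε)

variable {s : Finset ι → ι → ℝ≥0} {R : Finset ι}

lemma IsProfileOn.transfer {μ : Finset ι → ℝ≥0} {P : Finset ι} (hs : IsProfileOn μ P s)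
    (hk : k ∈ R) (hjk : j ≠ k) (hε : ε ≤ s R j) (h : s R j ≠ 0) :
    IsProfileOn μ P (transfer s R j k ε) := by
  have hj := hs.mem_of_ne_zero h
  refine ⟨fun R' i hi => ?_, fun R' hne hR'P => ?_, fun R' hR'P i => ?_⟩
  · rcases eq_or_ne R' R with rfl | hR'
    · rw [SelectionGame.transfer, update_self,
        shift_apply_of_ne (ne_of_mem_of_not_mem hj hi).symm (ne_of_mem_of_not_mem hk hi).symm,
        hs.1 _ _ hi]
    · rw [SelectionGame.transfer, update_of_ne hR', hs.1 _ _ hi]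
  · rcases eq_or_ne R' R with rfl | hR'
    · rw [SelectionGame.transfer, update_self, sum_shift hj hk hjk hε, hs.2.1 _ hne hR'P]
    · rw [SelectionGame.transfer, update_of_ne hR', hs.2.1 _ hne hR'P]
  · have hR' : R' ≠ R := fun e => hR'P (e ▸ hs.subset_of_ne_zero h)
    rw [SelectionGame.transfer, update_of_ne hR', hs.2.2 _ hR'P]

variable [Fintype ι]

noncomputable def potential (f : ι → ℝ≥0 → ℝ) (L : ι → ℝ≥0) : ℝ :=
  ∑ i, primitive (f i) (L i)

lemma potential_shift_lt {f : ι → ℝ≥0 → ℝ} {L : ι → ℝ≥0} (hmono : ∀ i, Monotone (f i))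
    (hjk : j ≠ k) (hε : 0 < ε) (hεL : ε ≤ L j) (hcost : f k (L k + ε) < f j (L j - ε)) :
    potential f (shift L j k ε) < potential f L := by
  have hsplit := sum_comp_shift (v := L) (ε := ε) (fun i => primitive (f i)) (mem_univ j)
    (mem_univ k) hjk
  have hj := mul_le_primitive_add_sub (hmono j) (L j - ε) ε
  rw [tsub_add_cancel_of_le hεL] at hj
  have hk := primitive_add_sub_le (hmono k) (L k) ε
  have hgain := mul_lt_mul_of_pos_left hcost (NNReal.coe_pos.2 hε)
  unfold potential
  linarith

lemma load_update (s : Finset ι → ι → ℝ≥0) (R : Finset ι) (w : ι → ℝ≥0) (i : ι) :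
    load (update s R w) i + s R i = load s i + w i := by
  unfold load
  rw [← add_sum_erase _ _ (mem_univ R), ← add_sum_erase univ (fun R' => s R' i) (mem_univ R),
    update_self, sum_congr rfl fun R' hR' => by rw [update_of_ne (ne_of_mem_erase hR')]]
  ring

lemma load_transfer (hjk : j ≠ k) (hε : ε ≤ s R j) :
    load (transfer s R j k ε) = shift (load s) j k ε := by
  funext i
  refine add_right_cancel (b := s R i) ?_
  rw [transfer, load_update]
  rcases eq_or_ne i k with rfl | hik
  · rw [shift_apply_right, shift_apply_right]
    ring
  rcases eq_or_ne i j with rfl | hij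
  · rw [shift_apply_left hjk, shift_apply_left hjk, ← add_tsub_assoc_of_le hε,
      tsub_add_eq_add_tsub (hε.trans (le_load s R i))]
  · rw [shift_apply_of_ne hij hik, shift_apply_of_ne hij hik]

end Potential

lemma exists_pos_le_and_lt {g h : ℝ≥0 → ℝ} (hg : Continuous g) (hh : Continuous h)
    {a b c : ℝ≥0} (hlt : g a < h b) (hc : 0 < c) :
    ∃ ε, 0 < ε ∧ ε ≤ c ∧ g (a + ε) < h (b - ε) := by
  have hnhds : {ε | g (a + ε) < h (b - ε)} ∈ 𝓝 (0 : ℝ≥0) :=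
    (isOpen_lt (by fun_prop) (by fun_prop)).mem_nhds (by simpa using hlt)
  have hnhdsGT : ∀ᶠ ε in 𝓝[>] (0 : ℝ≥0), g (a + ε) < h (b - ε) := nhdsWithin_le_nhds hnhds
  obtain ⟨ε, hε, hεc⟩ := (hnhdsGT.and (Ioc_mem_nhdsGT hc)).exists
  exact ⟨ε, hεc.1, hεc.2, hε⟩

section Equilibrium

variable {ι : Type*} {μ : Finset ι → ℝ≥0} {P : Finset ι} {s : Finset ι → ι → ℝ≥0}
  {f : ι → ℝ≥0 → ℝ}

lemma exists_isProfileOn (μ : Finset ι → ℝ≥0) (P : Finset ι) : ∃ s, IsProfileOn μ P s := by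
  classical
  refine ⟨fun R j => if R ⊆ P ∧ j ∈ R then μ R / R.card else 0, fun R j hj => if_neg
    fun h => hj h.2, fun R hR hRP => ?_, fun R hRP j => if_neg fun h => hRP h.1⟩
  rw [sum_congr rfl fun j hj => if_pos ⟨hRP, hj⟩, sum_const, nsmul_eq_mul,
    mul_div_cancel₀ _ (Nat.cast_ne_zero.2 hR.card_pos.ne')]

lemma isCompact_setOf_isProfileOn (μ : Finset ι → ℝ≥0) (P : Finset ι) :
    IsCompact {s | IsProfileOn μ P s} := by
  refine (isCompact_Icc (a := 0) (b := fun R _ => μ R)).of_isClosed_subset ?_ ?_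
  · simp only [IsProfileOn, Set.ofPred_and, Set.ofPred_forall]
    refine .inter ?_ (.inter ?_ ?_) <;> repeat refine isClosed_iInter fun _ => ?_
    all_goals exact isClosed_eq (by fun_prop) (by fun_prop)
  · refine fun s hs => ⟨fun _ _ => zero_le, fun R j => ?_⟩
    by_cases hj : j ∈ R
    · by_cases hRP : R ⊆ P
      · exact (single_le_sum (fun _ _ => zero_le) hj).trans_eq (hs.2.1 R ⟨j, hj⟩ hRP)
      · simp [hs.2.2 R hRP j]
    · simp [hs.1 R j hj]

variable [Fintype ι]

lemma continuous_potential_load (hmono : ∀ i, Monotone (f i)) :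
    Continuous fun s : Finset ι → ι → ℝ≥0 => potential f (load s) :=
  continuous_finsetSum _ fun i _ => (continuous_primitive (hmono i)).comp
    (continuous_finsetSum _ fun R _ => (continuous_apply i).comp (continuous_apply R))

namespace IsWardrop

variable {e : ℝ} {R : Finset ι} {j k : ι}

lemma subset_of_top (hw : IsWardrop f s) (hs : IsProfileOn μ P s)
    (hmax : ∀ i ∈ P, f i (load s i) ≤ e) (hj : j ∈ P.filter fun i => f i (load s i) = e)
    (h : s R j ≠ 0) : R ⊆ P.filter fun i => f i (load s i) = e := fun k hk => by
  have hkP := hs.subset_of_ne_zero h hk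
  exact mem_filter.2 ⟨hkP, le_antisymm (hmax k hkP) ((mem_filter.1 hj).2 ▸ hw R j k hk h)⟩

variable [DecidableEq ι]

lemma mem_of_bottom (hw : IsWardrop f s) (hs : IsProfileOn μ P s)
    (hmin : ∀ i ∈ P, e ≤ f i (load s i)) (hk : k ∈ R ∩ P.filter fun i => f i (load s i) = e)
    (h : s R j ≠ 0) : j ∈ P.filter fun i => f i (load s i) = e := by
  have hjP := hs.subset_of_ne_zero h (hs.mem_of_ne_zero h)
  obtain ⟨hkR, hke⟩ := mem_inter.1 hk
  exact mem_filter.2 ⟨hjP, le_antisymm ((mem_filter.1 hke).2 ▸ hw R j k hkR h) (hmin j hjP)⟩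

end IsWardrop

variable [DecidableEq ι]

/-- Moving a little mass of a type from a costlier to a cheaper resource lowers the potential. -/
lemma IsProfileOn.isWardrop_of_isMinOn (hmono : ∀ i, Monotone (f i))
    (hcont : ∀ i, Continuous (f i)) (hs : IsProfileOn μ P s)
    (hmin : IsMinOn (fun s => potential f (load s)) {s | IsProfileOn μ P s} s) :
    IsWardrop f s := by
  intro R j k hk h
  by_contra! hlt
  have hjk : j ≠ k := by
    rintro rfl
    exact hlt.false
  obtain ⟨ε, hε, hεs, hcost⟩ := exists_pos_le_and_lt (hcont k) (hcont j) hlt (pos_iff_ne_zero.2 h)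
  refine (isMinOn_iff.1 hmin _ (hs.transfer hk hjk hεs h)).not_gt ?_
  rw [load_transfer hjk hεs]
  exact potential_shift_lt hmono hjk hε (hεs.trans (le_load s R j)) hcost

theorem exists_isProfileOn_isWardrop (hmono : ∀ i, Monotone (f i))
    (hcont : ∀ i, Continuous (f i)) (μ : Finset ι → ℝ≥0) (P : Finset ι) :
    ∃ s, IsProfileOn μ P s ∧ IsWardrop f s := by
  obtain ⟨s, hs, hmin⟩ := (isCompact_setOf_isProfileOn μ P).exists_isMinOn
    (exists_isProfileOn μ P) (continuous_potential_load hmono).continuousOn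
  exact ⟨s, hs, hs.isWardrop_of_isMinOn hmono hcont hmin⟩

end Equilibrium

section Hierarchy

variable {n : ℕ} {f : Fin n → ℝ≥0 → ℝ} {μ : Finset (Fin n) → ℝ≥0} {P : Finset (Fin n)}
  {s : Finset (Fin n) → Fin n → ℝ≥0} {e : ℝ}

theorem IsWardrop.memD_top (hw : IsWardrop f s) (hs : IsProfileOn μ P s)
    (hmax : ∀ i ∈ P, f i (load s i) ≤ e) {j : Fin n} (hj : j ∈ P) (hje : f j (load s j) = e) :
    MemD n f μ univ (P.filter fun i => f i (load s i) = e) e := by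
  set W := P.filter fun i => f i (load s i) = e
  have hWP : W ⊆ P := filter_subset _ _
  have hW : ∀ R i, i ∈ W → s R i ≠ 0 → R ⊆ W := fun _ _ hi h => hw.subset_of_top hs hmax hi h
  have hcost : ∀ i ∈ W, f i (load s i) = e := fun i hi => (mem_filter.1 hi).2
  exact ⟨⟨j, mem_filter.2 ⟨hj, hje⟩⟩, subset_univ W, ⟨load s, hs.sum_load_eq hWP hW, hcost⟩,
    fun S' hS' _ => ⟨_, hs.sum_load_le hWP hW hS', load s, rfl, fun i hi => hcost i (hS' hi)⟩⟩

/-- Every type touching the bottom level set `B` puts all its mass on `B`, so the mass available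
to `S ∩ B` is at most its load, whereas equalizing it above the level of `B` needs strictly more. -/
theorem IsWardrop.le_of_memD (hmono : ∀ i, Monotone (f i)) (hw : IsWardrop f s)
    (hs : IsProfileOn μ P s) {e' : ℝ} (hmin : ∀ i ∈ P, e' ≤ f i (load s i))
    {V S : Finset (Fin n)} (hS : MemD n f μ V S e) (hSP : S ⊆ P) {j : Fin n} (hj : j ∈ S)
    (hje : f j (load s j) = e') : e ≤ e' := by
  by_contra! hlt
  set S' := S ∩ P.filter fun i => f i (load s i) = e'
  have hjS' : j ∈ S' := mem_inter.2 ⟨hj, mem_filter.2 ⟨hSP hj, hje⟩⟩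
  obtain ⟨t, ht, ν, hνt, hν⟩ := hS.2.2.2 S' inter_subset_left ⟨j, hjS'⟩
  have htouch : touchMass n μ S S' ≤ ∑ i ∈ S', load s i :=
    hs.le_sum_load hSP fun R hRS ⟨k, hk⟩ i h => mem_inter.2
      ⟨hRS (hs.mem_of_ne_zero h), hw.mem_of_bottom hs hmin (inter_subset_inter_left
        inter_subset_right hk) h⟩
  have hload : ∑ i ∈ S', load s i < t := hνt ▸ sum_lt_sum_of_nonempty ⟨j, hjS'⟩ fun i hi =>
    (hmono i).reflect_lt (by rw [hν i hi, (mem_filter.1 (mem_inter.1 hi).2).2]; exact hlt)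
  exact (hload.trans_le (ht.trans htouch)).false

end Hierarchy

end SelectionGame

open SelectionGame in
/-- For continuous (nondecreasing) cost functions there is a
consumption profile of the restricted game on the resource set `P_G` — only the
types contained in `P_G` participate, each distributing its mass within its
type — in which the cost of every resource of `P_G` is `h_G`. -/
theorem liquid_distribution_under_PG (n : ℕ) (f : Fin n → ℝ≥0 → ℝ)
    (μ : Finset (Fin n) → ℝ≥0)
    (hmono : ∀ j, Monotone (f j)) (hcont : ∀ j, Continuous (f j))
    (hG : ℝ) (hhG : IsHG n f μ Finset.univ hG)
    (PG : Finset (Fin n))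
    (hPG : ∀ j : Fin n, j ∈ PG ↔ ∃ S, MemD n f μ Finset.univ S hG ∧ j ∈ S) :
    ∃ s : Finset (Fin n) → Fin n → ℝ≥0,
      (∀ R : Finset (Fin n), ∀ j : Fin n, j ∉ R → s R j = 0) ∧
      (∀ R : Finset (Fin n), R.Nonempty → R ⊆ PG → ∑ j ∈ R, s R j = μ R) ∧
      (∀ R : Finset (Fin n), ¬ R ⊆ PG → ∀ j : Fin n, s R j = 0) ∧
      (∀ j ∈ PG, f j (∑ R : Finset (Fin n), s R j) = hG) := by
  obtain ⟨s, hs, hw⟩ := exists_isProfileOn_isWardrop hmono hcont μ PG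
  have hPG_ne : PG.Nonempty := by
    obtain ⟨S, hS⟩ := hhG.1
    obtain ⟨j, hj⟩ := hS.1
    exact ⟨j, (hPG j).2 ⟨S, hS, hj⟩⟩
  obtain ⟨jM, hjM, hmax⟩ := PG.exists_max_image (fun j => f j (load s j)) hPG_ne
  obtain ⟨jm, hjm, hmin⟩ := PG.exists_min_image (fun j => f j (load s j)) hPG_ne
  have htop : f jM (load s jM) ≤ hG := hhG.2 _ _ (hw.memD_top hs hmax hjM rfl)
  have hbot : hG ≤ f jm (load s jm) := by
    obtain ⟨S, hS, hjmS⟩ := (hPG jm).1 hjm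
    exact hw.le_of_memD hmono hs hmin hS (fun k hk => (hPG k).2 ⟨S, hS, hk⟩) hjmS rfl
  exact ⟨s, hs.1, hs.2.1, hs.2.2,
    fun j hj => le_antisymm ((hmax j hj).trans htop) (hbot.trans (hmin j hj))⟩
end

section
/- Let G be an n-resource selection game with continuous (nondecreasing) cost functions f_1, …, f_n. If P_G ≠ {1,…,n}, then h_G > h_{G−P_G}, where G − P_G is the game obtained from G by removing the resources in P_G. -/
/-
Suppose `h_{G−P_G} ≥ h_G` and let `T ∈ D_{G−P_G}` attain `h_{G−P_G}`. Every player type that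
can reach `T` in `G − P_G` comes from a type of `G` contained in `P_G ∪ T`, and `P_G`, a union of
members of `D_G` at level `h_G`, satisfies Hall's condition at `h_G`; lowering `T`'s level to
`h_G` keeps its Hall condition, so `W = P_G ∪ T` satisfies Hall's condition at `h_G` in `G`.
Water filling on `W` reaches some level `L ≥ h_G`. If `L = h_G` then `W ∈ D_G`, forcing
`T ⊆ P_G`; if `L > h_G`, discarding deficient subsets one at a time yields a member of `D_G` of
value at least `L > h_G`. Both contradict the definitions of `P_G` and `h_G`.
-/

open scoped NNReal

open Finset Filter Topology

namespace ResourceSelection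

section LeastPreimage

variable {f : ℝ≥0 → ℝ}

noncomputable def leastPreimage (f : ℝ≥0 → ℝ) (L : ℝ) : ℝ≥0 := sInf (f ⁻¹' {L})

theorem leastPreimage_le {L : ℝ} {x : ℝ≥0} (h : f x = L) : leastPreimage f L ≤ x :=
  csInf_le (OrderBot.bddBelow _) h

theorem apply_leastPreimage (hcont : Continuous f) {L : ℝ} (h : L ∈ Set.range f) :
    f (leastPreimage f L) = L :=
  (isClosed_singleton.preimage hcont).csInf_mem h (OrderBot.bddBelow _)

theorem leastPreimage_mono (hmono : Monotone f) (hcont : Continuous f) {L L' : ℝ}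
    (hL : L ∈ Set.range f) (hL' : L' ∈ Set.range f) (hLL' : L ≤ L') :
    leastPreimage f L ≤ leastPreimage f L' := by
  obtain ⟨x, rfl⟩ := hL
  have hmem : f x ∈ Set.Icc (f 0) (f (leastPreimage f L')) :=
    ⟨hmono zero_le, (apply_leastPreimage hcont hL').symm ▸ hLL'⟩
  obtain ⟨c, hc, hfc⟩ := intermediate_value_Icc zero_le hcont.continuousOn hmem
  exact (leastPreimage_le hfc).trans hc.2

theorem exists_tendsto_leastPreimage (hmono : Monotone f) (hcont : Continuous f) {u : ℕ → ℝ}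
    (hu : Monotone u) (hrange : ∀ j, u j ∈ Set.range f) {L : ℝ} (huL : Tendsto u atTop (𝓝 L))
    {m : ℝ≥0} (hm : ∀ j, leastPreimage f (u j) ≤ m) :
    ∃ x, f x = L ∧ Tendsto (fun j => leastPreimage f (u j)) atTop (𝓝 x) := by
  have hmono_seq : Monotone fun j => leastPreimage f (u j) := fun i j hij =>
    leastPreimage_mono hmono hcont (hrange i) (hrange j) (hu hij)
  have hlim := tendsto_atTop_ciSup hmono_seq ⟨m, Set.forall_mem_range.2 hm⟩
  refine ⟨_, tendsto_nhds_unique ((hcont.tendsto _).comp hlim) ?_, hlim⟩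
  simpa only [Function.comp_def, apply_leastPreimage hcont (hrange _)] using huL

theorem exists_isGreatest_le_of_apply_le (hcont : Continuous f) {a m : ℝ≥0} {L : ℝ}
    (ha : a ≤ m) (hfa : f a ≤ L) :
    ∃ b, a ≤ b ∧ f b ≤ L ∧ ∀ y ≤ m, f y ≤ L → y ≤ b := by
  have hcpt : IsCompact (Set.Icc 0 m ∩ f ⁻¹' Set.Iic L) :=
    isCompact_Icc.inter_right (isClosed_Iic.preimage hcont)
  obtain ⟨b, ⟨-, hfb⟩, hb⟩ := hcpt.exists_isGreatest ⟨a, ⟨zero_le, ha⟩, hfa⟩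
  exact ⟨b, hb ⟨⟨zero_le, ha⟩, hfa⟩, hfb, fun y hy hfy => hb ⟨⟨zero_le, hy⟩, hfy⟩⟩

end LeastPreimage

section FeasibleLevels

variable {ι : Type*} {f : ι → ℝ≥0 → ℝ} {W : Finset ι} {m : ℝ≥0}

def feasibleLevels (f : ι → ℝ≥0 → ℝ) (W : Finset ι) (m : ℝ≥0) : Set ℝ :=
  {L | (∀ k ∈ W, L ∈ Set.range (f k)) ∧ ∑ k ∈ W, leastPreimage (f k) L ≤ m}

theorem bddAbove_feasibleLevels (hmono : ∀ k, Monotone (f k)) (hcont : ∀ k, Continuous (f k))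
    (hW : W.Nonempty) : BddAbove (feasibleLevels f W m) := by
  obtain ⟨k, hk⟩ := hW
  refine ⟨f k m, fun L ⟨hrange, hsum⟩ => ?_⟩
  calc L = f k (leastPreimage (f k) L) := (apply_leastPreimage (hcont k) (hrange k hk)).symm
    _ ≤ f k m := hmono k ((single_le_sum (fun _ _ => zero_le) hk).trans hsum)

theorem sSup_mem_feasibleLevels (hmono : ∀ k, Monotone (f k)) (hcont : ∀ k, Continuous (f k))
    {S : Set ℝ} (hS : S ⊆ feasibleLevels f W m) (hne : S.Nonempty) (hbdd : BddAbove S) :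
    sSup S ∈ feasibleLevels f W m := by
  obtain ⟨u, hu, hlim, huS⟩ := exists_seq_tendsto_sSup hne hbdd
  have hlimit : ∀ k ∈ W, ∃ x, f k x = sSup S ∧
      Tendsto (fun j => leastPreimage (f k) (u j)) atTop (𝓝 x) := fun k hk =>
    exists_tendsto_leastPreimage (hmono k) (hcont k) hu (fun j => (hS (huS j)).1 k hk) hlim
      (fun j => (single_le_sum (fun _ _ => zero_le) hk).trans (hS (huS j)).2)
  choose! x hfx hx using hlimit
  refine ⟨fun k hk => ⟨x k, hfx k hk⟩, ?_⟩
  calc ∑ k ∈ W, leastPreimage (f k) (sSup S) ≤ ∑ k ∈ W, x k :=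
        sum_le_sum fun k hk => leastPreimage_le (hfx k hk)
    _ ≤ m := le_of_tendsto' (tendsto_finsetSum W hx) fun j => (hS (huS j)).2

/-- Spreading the deficit `m - ∑ b` evenly over `W` pushes every level strictly above `L`. -/
theorem exists_gt_mem_feasibleLevels (hmono : ∀ k, Monotone (f k))
    (hcont : ∀ k, Continuous (f k)) (hW : W.Nonempty) {L : ℝ} (hL : L ∈ feasibleLevels f W m)
    {b : ι → ℝ≥0} (hb : ∀ k ∈ W, ∀ y ≤ m, f k y ≤ L → y ≤ b k) (hsum : ∑ k ∈ W, b k < m) :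
    ∃ L' > L, L' ∈ feasibleLevels f W m := by
  have hcard : (#W : ℝ≥0) ≠ 0 := by simpa using hW.ne_empty
  set δ : ℝ≥0 := (m - ∑ k ∈ W, b k) / #W
  have hδ : 0 < δ := div_pos (tsub_pos_of_lt hsum) (pos_iff_ne_zero.2 hcard)
  have hsum_add : ∑ k ∈ W, (b k + δ) = m := by
    rw [sum_add_distrib, sum_const, nsmul_eq_mul, mul_div_cancel₀ _ hcard,
      add_tsub_cancel_of_le hsum.le]
  have hlt : ∀ k ∈ W, L < f k (b k + δ) := fun k hk => lt_of_not_ge fun hle =>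
    (lt_add_of_pos_right (b k) hδ).not_ge <| hb k hk _
      ((single_le_sum (f := fun k => b k + δ) (fun _ _ => zero_le) hk).trans hsum_add.le) hle
  set L' := W.inf' hW fun k => f k (b k + δ)
  refine ⟨L', (lt_inf'_iff hW).2 hlt, ?_⟩
  have hpre : ∀ k ∈ W, ∃ c ≤ b k + δ, f k c = L' := fun k hk => by
    obtain ⟨x, hx⟩ := hL.1 k hk
    have hmem : L' ∈ Set.Icc (f k 0) (f k (b k + δ)) :=
      ⟨(hmono k zero_le).trans (hx.le.trans ((lt_inf'_iff hW).2 hlt).le), inf'_le _ hk⟩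
    obtain ⟨c, hc, hfc⟩ := intermediate_value_Icc zero_le (hcont k).continuousOn hmem
    exact ⟨c, hc.2, hfc⟩
  choose! c hc hfc using hpre
  refine ⟨fun k hk => ⟨c k, hfc k hk⟩, ?_⟩
  calc ∑ k ∈ W, leastPreimage (f k) L' ≤ ∑ k ∈ W, (b k + δ) :=
        sum_le_sum fun k hk => (leastPreimage_le (hfc k hk)).trans (hc k hk)
    _ = m := hsum_add

end FeasibleLevels

theorem exists_sum_eq_of_sum_le_le_sum {ι : Type*} {s : Finset ι} {a b : ι → ℝ≥0}
    (hab : ∀ i ∈ s, a i ≤ b i) {m : ℝ≥0} (ha : ∑ i ∈ s, a i ≤ m) (hb : m ≤ ∑ i ∈ s, b i) :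
    ∃ ν : ι → ℝ≥0, (∀ i ∈ s, a i ≤ ν i ∧ ν i ≤ b i) ∧ ∑ i ∈ s, ν i = m := by
  set g : ℝ≥0 → ℝ≥0 := fun θ => ∑ i ∈ s, (a i + θ * (b i - a i))
  have hg0 : g 0 = ∑ i ∈ s, a i := by simp [g]
  have hg1 : g 1 = ∑ i ∈ s, b i :=
    sum_congr rfl fun i hi => by rw [one_mul, add_tsub_cancel_of_le (hab i hi)]
  have hgc : Continuous g := by fun_prop
  obtain ⟨θ, hθ, hgθ⟩ := intermediate_value_Icc zero_le_one hgc.continuousOn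
    (show m ∈ Set.Icc (g 0) (g 1) from ⟨hg0 ▸ ha, hg1 ▸ hb⟩)
  refine ⟨fun i => a i + θ * (b i - a i), fun i hi => ⟨le_self_add, ?_⟩, hgθ⟩
  calc a i + θ * (b i - a i) ≤ a i + 1 * (b i - a i) := by gcongr; exact hθ.2
    _ = b i := by rw [one_mul, add_tsub_cancel_of_le (hab i hi)]

section EqDist

variable {n : ℕ} {f : Fin n → ℝ≥0 → ℝ}

theorem EqDistOn.empty (e : ℝ) : EqDistOn n f ∅ 0 e := ⟨0, by simp, by simp⟩

theorem EqDistOn.union {S₁ S₂ : Finset (Fin n)} {t₁ t₂ : ℝ≥0} {e : ℝ}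
    (h₁ : EqDistOn n f S₁ t₁ e) (h₂ : EqDistOn n f S₂ t₂ e) (hd : Disjoint S₁ S₂) :
    EqDistOn n f (S₁ ∪ S₂) (t₁ + t₂) e := by
  classical
  obtain ⟨ν₁, hsum₁, hν₁⟩ := h₁
  obtain ⟨ν₂, hsum₂, hν₂⟩ := h₂
  refine ⟨fun k => if k ∈ S₁ then ν₁ k else ν₂ k, ?_, fun k hk => ?_⟩
  · rw [sum_union hd, ← hsum₁, ← hsum₂]
    congr 1
    · exact sum_congr rfl fun k hk => if_pos hk
    · exact sum_congr rfl fun k hk => if_neg (disjoint_right.1 hd hk)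
  · by_cases hk₁ : k ∈ S₁
    · simpa [hk₁] using hν₁ k hk₁
    · simpa [hk₁] using hν₂ k ((mem_union.1 hk).resolve_left hk₁)

theorem EqDistOn.mem_feasibleLevels {S : Finset (Fin n)} {t m : ℝ≥0} {e : ℝ}
    (h : EqDistOn n f S t e) (htm : t ≤ m) : e ∈ feasibleLevels f S m := by
  obtain ⟨ν, rfl, hν⟩ := h
  exact ⟨fun k hk => ⟨ν k, hν k hk⟩,
    (sum_le_sum fun k hk => leastPreimage_le (hν k hk)).trans htm⟩

theorem EqDistOn.exists_mass_le_of_level_le (hcont : ∀ k, Continuous (f k)) {S : Finset (Fin n)}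
    {t : ℝ≥0} {e e' : ℝ} (h : EqDistOn n f S t e') (h0 : ∀ k ∈ S, f k 0 ≤ e) (hee' : e ≤ e') :
    ∃ t' ≤ t, EqDistOn n f S t' e := by
  obtain ⟨ν, rfl, hν⟩ := h
  have hpre : ∀ k ∈ S, ∃ c ≤ ν k, f k c = e := fun k hk => by
    obtain ⟨c, hc, hfc⟩ := intermediate_value_Icc zero_le (hcont k).continuousOn
      (show e ∈ Set.Icc (f k 0) (f k (ν k)) from ⟨h0 k hk, (hν k hk).symm ▸ hee'⟩)
    exact ⟨c, hc.2, hfc⟩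
  choose! c hc hfc using hpre
  exact ⟨∑ k ∈ S, c k, sum_le_sum hc, c, rfl, hfc⟩

/-- The supremum of the levels reachable with mass at most `m` is reached with mass exactly `m`:
otherwise the surplus would lift it further. -/
theorem exists_eqDistOn_ge (hmono : ∀ k, Monotone (f k)) (hcont : ∀ k, Continuous (f k))
    {W : Finset (Fin n)} (hW : W.Nonempty) {m t : ℝ≥0} {L₀ : ℝ} (htm : t ≤ m)
    (hL₀ : EqDistOn n f W t L₀) : ∃ L, L₀ ≤ L ∧ EqDistOn n f W m L := by
  set S := feasibleLevels f W m ∩ Set.Ici L₀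
  have hL₀S : L₀ ∈ S := ⟨EqDistOn.mem_feasibleLevels hL₀ htm, Set.self_mem_Ici⟩
  have hbdd : BddAbove S := (bddAbove_feasibleLevels hmono hcont hW).mono Set.inter_subset_left
  set L := sSup S
  have hL : L ∈ feasibleLevels f W m :=
    sSup_mem_feasibleLevels hmono hcont Set.inter_subset_left ⟨L₀, hL₀S⟩ hbdd
  have hL₀L : L₀ ≤ L := le_csSup hbdd hL₀S
  have hlpre : ∀ k ∈ W, f k (leastPreimage (f k) L) = L := fun k hk =>
    apply_leastPreimage (hcont k) (hL.1 k hk)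
  have hmax : ∀ k ∈ W, ∃ b, leastPreimage (f k) L ≤ b ∧ f k b ≤ L ∧
      ∀ y ≤ m, f k y ≤ L → y ≤ b := fun k hk =>
    exists_isGreatest_le_of_apply_le (hcont k)
      ((single_le_sum (fun _ _ => zero_le) hk).trans hL.2) (hlpre k hk).le
  choose! b hlb hfb hb using hmax
  refine ⟨L, hL₀L, ?_⟩
  by_cases hmb : m ≤ ∑ k ∈ W, b k
  · obtain ⟨ν, hν, hνsum⟩ := exists_sum_eq_of_sum_le_le_sum hlb hL.2 hmb
    refine ⟨ν, hνsum, fun k hk => le_antisymm ((hmono k (hν k hk).2).trans (hfb k hk)) ?_⟩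
    exact (hlpre k hk).symm.le.trans (hmono k (hν k hk).1)
  · obtain ⟨L', hLL', hL'⟩ := exists_gt_mem_feasibleLevels hmono hcont hW hL hb (not_le.1 hmb)
    exact absurd (le_csSup hbdd ⟨hL', hL₀L.trans hLL'.le⟩) (not_le.2 hLL')

end EqDist

section Masses

variable {n : ℕ} (μ : Finset (Fin n) → ℝ≥0)

/-- The masses of the game `G − P`. -/
def removeMass (P : Finset (Fin n)) (R' : Finset (Fin n)) : ℝ≥0 :=
  ∑ R ∈ univ.filter (fun R : Finset (Fin n) => R.Nonempty ∧ R \ P = R'), μ R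

theorem touchMass_eq_sum_filter (S A : Finset (Fin n)) :
    touchMass n μ S A = ∑ R ∈ univ.filter (fun R => R ⊆ S ∧ (R ∩ A).Nonempty), μ R := by
  unfold touchMass
  congr 1
  ext R
  simp only [mem_filter, mem_powerset, mem_univ, true_and]
  exact ⟨fun ⟨hRS, _, hRA⟩ => ⟨hRS, hRA⟩, fun ⟨hRS, hRA⟩ => ⟨hRS, hRA.mono inter_subset_left, hRA⟩⟩

theorem touchMass_self (S : Finset (Fin n)) : touchMass n μ S S = innerMass n μ S := by
  unfold touchMass innerMass
  congr 1
  refine filter_congr fun R hR => ?_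
  rw [inter_eq_left.2 (mem_powerset.1 hR), and_self]

theorem innerMass_eq_touchMass_add_innerMass_sdiff (W A : Finset (Fin n)) :
    innerMass n μ W = touchMass n μ W A + innerMass n μ (W \ A) := by
  unfold innerMass touchMass
  rw [← sum_filter_add_sum_filter_not _ fun R => (R ∩ A).Nonempty, filter_filter]
  congr 2
  ext R
  simp only [mem_filter, mem_powerset, subset_sdiff, not_nonempty_iff_eq_empty,
    disjoint_iff_inter_eq_empty]
  exact ⟨fun ⟨⟨hRW, hR⟩, hRA⟩ => ⟨⟨hRW, hRA⟩, hR⟩, fun ⟨⟨hRW, hRA⟩, hR⟩ => ⟨⟨hRW, hR⟩, hRA⟩⟩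

theorem touchMass_removeMass (P T B : Finset (Fin n)) :
    touchMass n (removeMass μ P) T B =
      ∑ R ∈ univ.filter (fun R => R \ P ⊆ T ∧ (R \ P ∩ B).Nonempty), μ R := by
  rw [touchMass_eq_sum_filter, eq_comm, ← sum_fiberwise_of_maps_to (g := fun R => R \ P)
    (t := univ.filter fun R' => R' ⊆ T ∧ (R' ∩ B).Nonempty) fun R hR => by simpa using hR]
  refine sum_congr rfl fun R' hR' => ?_
  rw [removeMass, filter_filter]
  refine sum_congr (filter_congr fun R _ => ?_) fun _ _ => rfl
  simp only [mem_filter, mem_univ, true_and] at hR'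
  constructor
  · rintro ⟨-, rfl⟩
    exact ⟨hR'.2.mono (inter_subset_left.trans sdiff_subset), rfl⟩
  · rintro ⟨-, rfl⟩
    exact ⟨hR', rfl⟩

theorem touchMass_le_touchMass_removeMass {P S B : Finset (Fin n)} (hBP : Disjoint B P) :
    touchMass n μ S B ≤ touchMass n (removeMass μ P) (S \ P) B := by
  rw [touchMass_eq_sum_filter, touchMass_removeMass]
  refine sum_le_sum_of_subset fun R hR => ?_
  simp only [mem_filter, mem_univ, true_and] at hR ⊢
  refine ⟨sdiff_subset_sdiff hR.1 subset_rfl, ?_⟩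
  rw [sdiff_inter_right_comm, sdiff_eq_self_of_disjoint (hBP.mono_left inter_subset_right)]
  exact hR.2

theorem touchMass_add_touchMass_removeMass_le {P T A A₁ A₂ : Finset (Fin n)} (h₁ : A₁ ⊆ A)
    (h₂ : A₂ ⊆ A) :
    touchMass n μ P A₁ + touchMass n (removeMass μ P) T A₂ ≤ touchMass n μ (P ∪ T) A := by
  rw [touchMass_eq_sum_filter, touchMass_removeMass, touchMass_eq_sum_filter, ← sum_union]
  · refine sum_le_sum_of_subset fun R hR => ?_
    simp only [mem_union, mem_filter, mem_univ, true_and] at hR ⊢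
    rcases hR with ⟨hRP, hRA⟩ | ⟨hRT, hRA⟩
    · exact ⟨hRP.trans subset_union_left, hRA.mono (inter_subset_inter_left h₁)⟩
    · exact ⟨sdiff_le_iff.1 hRT, hRA.mono (inter_subset_inter sdiff_subset h₂)⟩
  · refine disjoint_filter.2 fun R _ hRP hRT => ?_
    obtain ⟨x, hx⟩ := hRT.2
    exact (mem_sdiff.1 (mem_inter.1 hx).1).2 (hRP.1 (mem_sdiff.1 (mem_inter.1 hx).1).1)

end Masses

section Hall

variable {n : ℕ} {f : Fin n → ℝ≥0 → ℝ} {μ : Finset (Fin n) → ℝ≥0}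

/-- For `e = E_G(S)` this says `M_G(S) = ∅`. -/
def HallCondition (n : ℕ) (f : Fin n → ℝ≥0 → ℝ) (μ : Finset (Fin n) → ℝ≥0) (S : Finset (Fin n))
    (e : ℝ) : Prop :=
  ∀ A ⊆ S, ∃ t ≤ touchMass n μ S A, EqDistOn n f A t e

theorem memD_iff {V S : Finset (Fin n)} {e : ℝ} :
    MemD n f μ V S e ↔
      S.Nonempty ∧ S ⊆ V ∧ EqDistOn n f S (innerMass n μ S) e ∧ HallCondition n f μ S e := by
  refine and_congr_right' <| and_congr_right' <| and_congr_right' ⟨fun h A hAS => ?_,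
    fun h A hAS _ => h A hAS⟩
  obtain rfl | hA := A.eq_empty_or_nonempty
  · exact ⟨0, zero_le, EqDistOn.empty e⟩
  · exact h A hAS hA

theorem HallCondition.exists_eqDistOn_self {S : Finset (Fin n)} {e : ℝ}
    (h : HallCondition n f μ S e) : ∃ t ≤ innerMass n μ S, EqDistOn n f S t e :=
  touchMass_self μ S ▸ h S subset_rfl

theorem hallCondition_empty (e : ℝ) : HallCondition n f μ ∅ e := fun _ hA =>
  ⟨0, zero_le, subset_empty.1 hA ▸ EqDistOn.empty e⟩

theorem HallCondition.union_removeMass {P T : Finset (Fin n)} {e : ℝ}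
    (hP : HallCondition n f μ P e) (hT : HallCondition n f (removeMass μ P) T e) :
    HallCondition n f μ (P ∪ T) e := by
  intro A hA
  obtain ⟨t₁, ht₁, h₁⟩ := hP (A ∩ P) inter_subset_right
  obtain ⟨t₂, ht₂, h₂⟩ := hT (A \ P) (sdiff_le_iff.2 hA)
  refine ⟨t₁ + t₂, (add_le_add ht₁ ht₂).trans
    (touchMass_add_touchMass_removeMass_le μ inter_subset_left sdiff_subset), ?_⟩
  rw [add_comm, ← sdiff_union_inter A P]
  exact EqDistOn.union h₂ h₁ (disjoint_sdiff_inter A P)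

theorem HallCondition.removeMass {P S : Finset (Fin n)} {e : ℝ} (h : HallCondition n f μ S e) :
    HallCondition n f (removeMass μ P) (S \ P) e := fun A hA =>
  let ⟨t, ht, hA'⟩ := h A (hA.trans sdiff_subset)
  ⟨t, ht.trans (touchMass_le_touchMass_removeMass μ (disjoint_of_subset_left hA sdiff_disjoint)),
    hA'⟩

theorem HallCondition.union {S₁ S₂ : Finset (Fin n)} {e : ℝ} (h₁ : HallCondition n f μ S₁ e)
    (h₂ : HallCondition n f μ S₂ e) : HallCondition n f μ (S₁ ∪ S₂) e :=
  union_sdiff_self_eq_union (s := S₁) ▸ h₁.union_removeMass h₂.removeMass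

theorem hallCondition_of_cover {P : Finset (Fin n)} {e : ℝ}
    (hP : ∀ j ∈ P, ∃ S ⊆ P, j ∈ S ∧ HallCondition n f μ S e) : HallCondition n f μ P e := by
  classical
  have hsup : P = (univ.filter fun S => S ⊆ P ∧ HallCondition n f μ S e).sup id := by
    refine le_antisymm (fun j hj => ?_) (Finset.sup_le fun S hS => (mem_filter.1 hS).2.1)
    obtain ⟨S, hSP, hjS, hS⟩ := hP j hj
    exact le_sup (f := id) (mem_filter.2 ⟨mem_univ S, hSP, hS⟩) hjS
  rw [hsup]
  exact sup_induction (p := fun S => HallCondition n f μ S e) (hallCondition_empty e)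
    (fun _ h₁ _ h₂ => h₁.union h₂) fun S hS => (mem_filter.1 hS).2.2

theorem HallCondition.of_level_le (hcont : ∀ k, Continuous (f k)) {S : Finset (Fin n)} {e e' : ℝ}
    (h : HallCondition n f μ S e') (h0 : ∀ k ∈ S, f k 0 ≤ e) (hee' : e ≤ e') :
    HallCondition n f μ S e := by
  intro A hA
  obtain ⟨t, ht, hA'⟩ := h A hA
  obtain ⟨t', ht', hA''⟩ :=
    EqDistOn.exists_mass_le_of_level_le hcont hA' (fun k hk => h0 k (hA hk)) hee'
  exact ⟨t', ht'.trans ht, hA''⟩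

theorem memD_singleton {V : Finset (Fin n)} {k : Fin n} (hk : k ∈ V) :
    MemD n f μ V {k} (f k (innerMass n μ {k})) := by
  have hEq : EqDistOn n f {k} (innerMass n μ {k}) (f k (innerMass n μ {k})) :=
    ⟨fun _ => innerMass n μ {k}, sum_singleton _ _, fun j hj => by rw [mem_singleton.1 hj]⟩
  refine memD_iff.2 ⟨singleton_nonempty k, singleton_subset_iff.2 hk, hEq, fun A hA => ?_⟩
  obtain rfl | rfl := subset_singleton_iff.1 hA
  · exact hallCondition_empty _ ∅ subset_rfl
  · exact ⟨_, (touchMass_self μ {k}).ge, hEq⟩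

end Hall

section Recursion

variable {n : ℕ} {f : Fin n → ℝ≥0 → ℝ} {μ : Finset (Fin n) → ℝ≥0}

/-- If some `A ⊆ W` violates Hall's condition at the level where `W` equalizes its mass, `W \ A`
keeps more mass than it needs at that level, and the argument recurses on `W \ A`. -/
theorem exists_memD_ge (hmono : ∀ k, Monotone (f k)) (hcont : ∀ k, Continuous (f k))
    {V W : Finset (Fin n)} (hWV : W ⊆ V) (hW : W.Nonempty) {t : ℝ≥0} {L₀ : ℝ}
    (ht : t ≤ innerMass n μ W) (hL₀ : EqDistOn n f W t L₀) :
    ∃ S e, L₀ ≤ e ∧ MemD n f μ V S e := by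
  induction W using Finset.strongInduction generalizing t L₀ with
  | H W ih =>
    obtain ⟨L, hL₀L, hL⟩ := exists_eqDistOn_ge hmono hcont hW ht hL₀
    by_cases hHall : HallCondition n f μ W L
    · exact ⟨W, L, hL₀L, memD_iff.2 ⟨hW, hWV, hL, hHall⟩⟩
    obtain ⟨A, hAW, hA⟩ : ∃ A ⊆ W, ∀ t ≤ touchMass n μ W A, ¬EqDistOn n f A t L := by
      simpa [HallCondition] using hHall
    obtain ⟨ν, hνsum, hν⟩ := hL
    have hAν : touchMass n μ W A < ∑ k ∈ A, ν k :=
      lt_of_not_ge fun h => hA _ h ⟨ν, rfl, fun k hk => hν k (hAW hk)⟩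
    have hsplit : ∑ k ∈ A, ν k + ∑ k ∈ W \ A, ν k = touchMass n μ W A + innerMass n μ (W \ A) := by
      rw [add_comm, sum_sdiff hAW, hνsum, innerMass_eq_touchMass_add_innerMass_sdiff]
    have hrest : ∑ k ∈ W \ A, ν k < innerMass n μ (W \ A) :=
      lt_of_not_ge fun h => (add_lt_add_of_lt_of_le hAν h).ne hsplit.symm
    have hAne : A.Nonempty := nonempty_of_sum_ne_zero (hAν.trans_le' zero_le).ne'
    have hrestne : (W \ A).Nonempty :=
      nonempty_iff_ne_empty.2 fun h => by simp [h, innerMass, filter_singleton] at hrest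
    obtain ⟨S, e, hLe, hS⟩ := ih (W \ A) (sdiff_ssubset hAW hAne) (sdiff_subset.trans hWV) hrestne
      hrest.le ⟨ν, rfl, fun k hk => hν k (mem_sdiff.1 hk).1⟩
    exact ⟨S, e, hL₀L.trans hLe, hS⟩

theorem memD_or_exists_memD_gt (hmono : ∀ k, Monotone (f k)) (hcont : ∀ k, Continuous (f k))
    {V W : Finset (Fin n)} (hWV : W ⊆ V) (hW : W.Nonempty) {e : ℝ}
    (hHall : HallCondition n f μ W e) :
    MemD n f μ V W e ∨ ∃ S e', e < e' ∧ MemD n f μ V S e' := by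
  obtain ⟨t, ht, hEq⟩ := hHall.exists_eqDistOn_self
  obtain ⟨L, heL, hL⟩ := exists_eqDistOn_ge hmono hcont hW ht hEq
  obtain rfl | hlt := heL.eq_or_lt
  · exact .inl (memD_iff.2 ⟨hW, hWV, hL, hHall⟩)
  · obtain ⟨S, e', hLe', hS⟩ := exists_memD_ge hmono hcont hWV hW le_rfl hL
    exact .inr ⟨S, e', hlt.trans_le hLe', hS⟩

end Recursion

end ResourceSelection

open ResourceSelection Finset in
theorem hG_gt_hG_sub_PG_general (n : ℕ) (f : Fin n → ℝ≥0 → ℝ)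
    (μ : Finset (Fin n) → ℝ≥0)
    (hmono : ∀ j, Monotone (f j)) (hcont : ∀ j, Continuous (f j))
    (hG : ℝ) (hhG : IsHG n f μ Finset.univ hG)
    (PG : Finset (Fin n))
    (hPG : ∀ j : Fin n, j ∈ PG ↔ ∃ S, MemD n f μ Finset.univ S hG ∧ j ∈ S)
    (μ' : Finset (Fin n) → ℝ≥0)
    (hμ' : ∀ R' : Finset (Fin n),
      μ' R' = ∑ R ∈ Finset.univ.filter (fun R : Finset (Fin n) => R.Nonempty ∧ R \ PG = R'), μ R)
    (hG' : ℝ) (hhG' : IsHG n f μ' (Finset.univ \ PG) hG') :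
    hG' < hG := by
  obtain ⟨-, hmax⟩ := hhG
  obtain ⟨⟨T, hT⟩, -⟩ := hhG'
  obtain rfl : μ' = removeMass μ PG := funext hμ'
  obtain ⟨hTne, hTV, -, hTHall⟩ := memD_iff.1 hT
  by_contra! hle
  have hf0 : ∀ k, f k 0 ≤ hG := fun k =>
    (hmono k zero_le).trans (hmax _ _ (memD_singleton (mem_univ k)))
  have hPGHall : HallCondition n f μ PG hG := hallCondition_of_cover fun j hj => by
    obtain ⟨S, hS, hjS⟩ := (hPG j).1 hj
    exact ⟨S, fun i hi => (hPG i).2 ⟨S, hS, hi⟩, hjS, (memD_iff.1 hS).2.2.2⟩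
  have hWHall : HallCondition n f μ (PG ∪ T) hG :=
    hPGHall.union_removeMass (hTHall.of_level_le hcont (fun k _ => hf0 k) hle)
  obtain ⟨k, hkT⟩ := hTne
  rcases memD_or_exists_memD_gt hmono hcont (subset_univ _) ⟨k, mem_union_right _ hkT⟩ hWHall
    with hW | ⟨S, e, he, hS⟩
  · exact (mem_sdiff.1 (hTV hkT)).2 ((hPG k).2 ⟨_, hW, mem_union_right _ hkT⟩)
  · exact (hmax S e hS).not_gt he

/-- Pistons stopping order: for continuous (nondecreasing)
cost functions, if `P_G ≠ {1,…,n}`, then `h_G > h_{G − P_G}`, where `G − P_G`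
is the game on the resources outside `P_G` in which the mass of each nonempty
type `R'` is `Σ {μ R : R nonempty, R \ P_G = R'}`. -/
theorem hG_gt_hG_sub_PG (n : ℕ) (f : Fin n → ℝ≥0 → ℝ)
    (μ : Finset (Fin n) → ℝ≥0)
    (hmono : ∀ j, Monotone (f j)) (hcont : ∀ j, Continuous (f j))
    (hG : ℝ) (hhG : IsHG n f μ Finset.univ hG)
    (PG : Finset (Fin n))
    (hPG : ∀ j : Fin n, j ∈ PG ↔ ∃ S, MemD n f μ Finset.univ S hG ∧ j ∈ S)
    (hPGne : PG ≠ Finset.univ)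
    (μ' : Finset (Fin n) → ℝ≥0)
    (hμ' : ∀ R' : Finset (Fin n),
      μ' R' = ∑ R ∈ Finset.univ.filter (fun R : Finset (Fin n) => R.Nonempty ∧ R \ PG = R'), μ R)
    (hG' : ℝ) (hhG' : IsHG n f μ' (Finset.univ \ PG) hG') :
    hG' < hG :=
  hG_gt_hG_sub_PG_general n f μ hmono hcont hG hhG PG hPG μ' hμ' hG' hhG'
end
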